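/- arXiv:2102.07400 — 7 statements merged into one kernel-verified Lean document; each statement's English description precedes it below -/
import Mathlib

section
/- Let X, Z be the generalized Pauli operators on ℂ^d and let α, β, γ, δ be integers with 0 ≤ α,β,γ,δ ≤ d−1. If there exists a unitary U and phases such that U X U† is proportional to X^α Z^γ and U Z U† is proportional to X^β Z^δ, then αδ − βγ ≡ 1 (mod d). -/
noncomputable def pauliX (d : ℕ) [NeZero d] : Matrix (Fin d) (Fin d) ℂ :=
  Matrix.of fun a b => if a = b + 1 then 1 else 0

noncomputable def pauliZ (d : ℕ) [NeZero d] : Matrix (Fin d) (Fin d) ℂ :=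
  Matrix.diagonal fun a => Complex.exp (2 * Real.pi * Complex.I * (a : ℕ) / d)

open Matrix

namespace CliffordAux

variable (d : ℕ) [NeZero d]

open Fin.NatCast

noncomputable def ω : ℂ := Complex.exp (2 * Real.pi * Complex.I / d)

lemma hprim : IsPrimitiveRoot (ω d) d := Complex.isPrimitiveRoot_exp d (NeZero.ne d)

lemma ω_pow_d : ω d ^ d = 1 := (hprim d).pow_eq_one

lemma ω_pow_mod (m : ℕ) : ω d ^ (m % d) = ω d ^ m := by
  conv_rhs => rw [← Nat.mod_add_div m d]
  rw [pow_add, pow_mul, ω_pow_d, one_pow, mul_one]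

lemma Z_eq : pauliZ d = Matrix.diagonal (fun a : Fin d => ω d ^ (a : ℕ)) := by
  unfold pauliZ ω
  have : (fun a : Fin d => Complex.exp (2 * Real.pi * Complex.I * (a : ℕ) / d))
      = fun a : Fin d => Complex.exp (2 * Real.pi * Complex.I / d) ^ (a : ℕ) := by
    funext a
    rw [← Complex.exp_nat_mul]
    congr 1
    ring
  rw [this]

lemma ω_ne_zero : ω d ≠ 0 := Complex.exp_ne_zero _

lemma comm1 : pauliZ d * pauliX d = ω d • (pauliX d * pauliZ d) := by
  ext a b
  rw [Z_eq]
  simp only [Matrix.diagonal_mul, Matrix.mul_diagonal, pauliX, Matrix.smul_apply,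
    Matrix.of_apply, smul_eq_mul, mul_ite, ite_mul, mul_one, mul_zero, one_mul, zero_mul]
  split_ifs with h
  · subst h
    have h1 : ((b + 1 : Fin d) : ℕ) = ((b : ℕ) + 1) % d := by
      rw [Fin.val_add, Fin.val_one']
      conv_rhs => rw [Nat.add_mod]
      rw [Nat.mod_eq_of_lt b.isLt]
    rw [h1, ω_pow_mod, pow_succ, mul_comm]
  · rfl

lemma commZXp (b : ℕ) : pauliZ d * pauliX d ^ b = (ω d ^ b) • (pauliX d ^ b * pauliZ d) := by
  induction b with
  | zero => simp
  | succ n ih =>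
    rw [pow_succ, ← Matrix.mul_assoc, ih, Matrix.smul_mul, Matrix.mul_assoc, comm1,
      Matrix.mul_smul, smul_smul, ← Matrix.mul_assoc, ← pow_succ]

lemma commZpXp (c b : ℕ) :
    pauliZ d ^ c * pauliX d ^ b = (ω d ^ (c * b)) • (pauliX d ^ b * pauliZ d ^ c) := by
  induction c with
  | zero => simp
  | succ n ih =>
    rw [pow_succ, Matrix.mul_assoc, commZXp, Matrix.mul_smul, ← Matrix.mul_assoc, ih,
      Matrix.smul_mul, smul_smul, ← pow_add, Matrix.mul_assoc, ← pow_succ,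
      show b + n * b = (n + 1) * b by ring]

lemma Xpow (k : ℕ) :
    pauliX d ^ k = Matrix.of fun a b : Fin d => if a = b + (k : Fin d) then 1 else 0 := by
  induction k with
  | zero => ext a b; simp [Matrix.one_apply]
  | succ n ih =>
    ext a b
    rw [pow_succ, ih]
    simp only [Matrix.mul_apply, Matrix.of_apply, pauliX, mul_ite, mul_one, mul_zero]
    rw [Finset.sum_ite_eq' Finset.univ (b + 1)
      (fun c => if a = c + (n : Fin d) then (1 : ℂ) else 0)]
    simp only [Finset.mem_univ, if_true]
    have : b + 1 + (n : Fin d) = b + ((n + 1 : ℕ) : Fin d) := by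
      push_cast
      abel
    rw [this]

lemma N_ne_zero (k m : ℕ) : pauliX d ^ k * pauliZ d ^ m ≠ 0 := by
  intro h
  have h0 := congrFun (congrFun h ((k : Fin d))) 0
  rw [Z_eq, Matrix.diagonal_pow, Matrix.mul_diagonal, Xpow] at h0
  simp at h0

end CliffordAux

open CliffordAux in
theorem clifford_implies_det_one (d : ℕ) [NeZero d] (α β γ δ : ℕ)
    (hα : α ≤ d - 1) (hβ : β ≤ d - 1) (hγ : γ ≤ d - 1) (hδ : δ ≤ d - 1)
    (U : Matrix (Fin d) (Fin d) ℂ) (hU : U ∈ Matrix.unitaryGroup (Fin d) ℂ)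
    (c₁ c₂ : ℂ) (hc₁ : ‖c₁‖ = 1) (hc₂ : ‖c₂‖ = 1)
    (hX : U * pauliX d * Uᴴ = c₁ • (pauliX d ^ α * pauliZ d ^ γ))
    (hZ : U * pauliZ d * Uᴴ = c₂ • (pauliX d ^ β * pauliZ d ^ δ)) :
    ((α : ℤ) * δ - (β : ℤ) * γ) ≡ 1 [ZMOD d] := by
  have hU1 : Uᴴ * U = 1 := by
    have := hU.1
    rwa [Matrix.star_eq_conjTranspose] at this
  set N := pauliX d ^ (α + β) * pauliZ d ^ (γ + δ) with hN
  have key1 : (U * pauliZ d * Uᴴ) * (U * pauliX d * Uᴴ) = U * (pauliZ d * pauliX d) * Uᴴ := by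
    simp only [Matrix.mul_assoc]
    rw [← Matrix.mul_assoc Uᴴ U, hU1, Matrix.one_mul]
  have key2 : (U * pauliX d * Uᴴ) * (U * pauliZ d * Uᴴ) = U * (pauliX d * pauliZ d) * Uᴴ := by
    simp only [Matrix.mul_assoc]
    rw [← Matrix.mul_assoc Uᴴ U, hU1, Matrix.one_mul]
  have hP : (pauliX d ^ β * pauliZ d ^ δ) * (pauliX d ^ α * pauliZ d ^ γ)
      = (ω d ^ (δ * α)) • N := by
    rw [hN, Matrix.mul_assoc, ← Matrix.mul_assoc (pauliZ d ^ δ), commZpXp, Matrix.smul_mul,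
      Matrix.mul_smul, ← Matrix.mul_assoc, ← Matrix.mul_assoc, ← pow_add, Matrix.mul_assoc,
      ← pow_add, add_comm β α, add_comm δ γ]
  have hQ : (pauliX d ^ α * pauliZ d ^ γ) * (pauliX d ^ β * pauliZ d ^ δ)
      = (ω d ^ (γ * β)) • N := by
    rw [hN, Matrix.mul_assoc, ← Matrix.mul_assoc (pauliZ d ^ γ), commZpXp, Matrix.smul_mul,
      Matrix.mul_smul, ← Matrix.mul_assoc, ← Matrix.mul_assoc, ← pow_add, Matrix.mul_assoc,
      ← pow_add]
  have key : (c₂ * c₁ * ω d ^ (δ * α)) • N = (ω d * (c₁ * c₂ * ω d ^ (γ * β))) • N := by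
    calc (c₂ * c₁ * ω d ^ (δ * α)) • N
        = (c₂ • (pauliX d ^ β * pauliZ d ^ δ)) * (c₁ • (pauliX d ^ α * pauliZ d ^ γ)) := by
          rw [smul_mul_smul_comm, hP, smul_smul, mul_assoc]
      _ = (U * pauliZ d * Uᴴ) * (U * pauliX d * Uᴴ) := by rw [hX, hZ]
      _ = U * (pauliZ d * pauliX d) * Uᴴ := key1
      _ = ω d • (U * (pauliX d * pauliZ d) * Uᴴ) := by
          rw [comm1]
          simp only [Matrix.mul_smul, Matrix.smul_mul]
      _ = ω d • ((U * pauliX d * Uᴴ) * (U * pauliZ d * Uᴴ)) := by rw [key2]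
      _ = ω d • ((c₁ • (pauliX d ^ α * pauliZ d ^ γ)) * (c₂ • (pauliX d ^ β * pauliZ d ^ δ))) := by
          rw [hX, hZ]
      _ = (ω d * (c₁ * c₂ * ω d ^ (γ * β))) • N := by
          rw [smul_mul_smul_comm, hQ, smul_smul, smul_smul, mul_assoc]
  have hNz := N_ne_zero d (α + β) (γ + δ)
  have hscal : c₂ * c₁ * ω d ^ (δ * α) = ω d * (c₁ * c₂ * ω d ^ (γ * β)) := by
    by_contra hne
    apply hNz
    have h0 := sub_eq_zero.mpr key
    rw [← sub_smul] at h0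
    rcases smul_eq_zero.mp h0 with h | h
    · exact absurd (sub_eq_zero.mp h) hne
    · exact h
  have hc₁0 : c₁ ≠ 0 := by intro h; rw [h] at hc₁; simp at hc₁
  have hc₂0 : c₂ ≠ 0 := by intro h; rw [h] at hc₂; simp at hc₂
  have hωeq : ω d ^ (δ * α) = ω d ^ (γ * β + 1) := by
    apply mul_left_cancel₀ (mul_ne_zero hc₁0 hc₂0)
    rw [pow_succ]
    linear_combination hscal
  have hz : (ω d) ^ (((δ * α : ℕ) : ℤ) - ((γ * β + 1 : ℕ) : ℤ)) = 1 := by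
    rw [zpow_sub₀ (ω_ne_zero d), zpow_natCast, zpow_natCast, hωeq, div_self]
    exact pow_ne_zero _ (ω_ne_zero d)
  have hdvd : (d : ℤ) ∣ (((δ * α : ℕ) : ℤ) - ((γ * β + 1 : ℕ) : ℤ)) :=
    ((hprim d).zpow_eq_one_iff_dvd _).mp hz
  rw [Int.modEq_iff_dvd]
  have : (1 : ℤ) - ((α : ℤ) * δ - (β : ℤ) * γ) = -(((δ * α : ℕ) : ℤ) - ((γ * β + 1 : ℕ) : ℤ)) := by
    push_cast
    ring
  rw [this]
  exact dvd_neg.mpr hdvd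
end

section
/- Let X, Z be the generalized Pauli operators on ℂ^d and let α, β, γ, δ be integers with αδ − βγ ≡ 1 (mod d). Then there exists a unitary U on ℂ^d such that U X U† is proportional (up to phase) to X^α Z^γ and U Z U† is proportional (up to phase) to X^β Z^δ. -/
open Matrix

variable (d : ℕ) [NeZero d]

noncomputable def zeta : ℂ := Complex.exp (2 * Real.pi * Complex.I / d)

lemma zeta_prim : IsPrimitiveRoot (zeta d) d :=
  Complex.isPrimitiveRoot_exp d (NeZero.ne d)

lemma zeta_pow_d : zeta d ^ d = 1 := (zeta_prim d).pow_eq_one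

variable {d}

lemma abs_one_of_pow {c : ℂ} (h : ‖c‖ ^ d = 1) : ‖c‖ = 1 :=
  (pow_left_strictMonoOn₀ (NeZero.ne d)).injOn (Set.mem_setOf.mpr (norm_nonneg c))
    (Set.mem_setOf.mpr zero_le_one) (by simpa using h)

lemma zeta_abs : ‖zeta d‖ = 1 := by
  apply abs_one_of_pow (d := d)
  rw [← norm_pow, zeta_pow_d]
  exact norm_one

lemma zeta_ne_zero : zeta d ≠ 0 := by
  intro h
  have := zeta_abs (d := d)
  rw [h] at this
  simp at this

lemma zeta_pow_mod (n : ℕ) : zeta d ^ (n % d) = zeta d ^ n := by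
  conv_rhs => rw [← Nat.div_add_mod n d, pow_add, pow_mul, zeta_pow_d, one_pow, one_mul]

lemma pauliZ_eq : pauliZ d = Matrix.diagonal fun a : Fin d => zeta d ^ (a : ℕ) := by
  have h : (fun a : Fin d => Complex.exp (2 * Real.pi * Complex.I * (a : ℕ) / d))
      = fun a : Fin d => zeta d ^ (a : ℕ) := by
    funext a
    rw [zeta, ← Complex.exp_nat_mul]
    congr 1
    ring
  unfold pauliZ
  rw [h]

open Fin.NatCast in
lemma pauliX_pow (k : ℕ) :
    pauliX d ^ k = Matrix.of fun a b => if a = b + (k : Fin d) then 1 else 0 := by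
  induction k with
  | zero =>
    ext a b
    simp [Matrix.one_apply, eq_comm]
  | succ k ih =>
    rw [pow_succ, ih]
    ext a b
    rw [Matrix.mul_apply]
    simp only [Matrix.of_apply, pauliX]
    rw [Finset.sum_eq_single (b + 1)]
    · push_cast
      simp [add_assoc, add_comm (1 : Fin d)]
    · intro c _ hc
      simp [hc]
    · simp

open Fin.NatCast in
lemma pauliX_pow_d : pauliX d ^ d = 1 := by
  rw [pauliX_pow]
  ext a b
  simp [Matrix.one_apply, Fin.natCast_self]

lemma pauliX_unitary : pauliX d ∈ Matrix.unitaryGroup (Fin d) ℂ := by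
  rw [Matrix.mem_unitaryGroup_iff']
  ext a b
  rw [Matrix.mul_apply]
  simp only [Matrix.conjTranspose_apply, pauliX, Matrix.of_apply, Matrix.one_apply]
  rw [Finset.sum_eq_single (a + 1)]
  · by_cases h : a = b <;> simp [h, add_left_inj]
  · intro c _ hc
    simp [hc, Ne.symm hc]
  · simp

lemma swap_pow_left {R : Type*} [CommRing R] {M : Type*} [Ring M] [Algebra R M]
    {P Q : M} {c : R} (h : Q * P = c • (P * Q)) (n : ℕ) :
    Q ^ n * P = c ^ n • (P * Q ^ n) := by
  induction n with
  | zero => simp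
  | succ n ih =>
    rw [pow_succ, mul_assoc, h, mul_smul_comm, ← mul_assoc, ih, smul_mul_assoc, smul_smul,
      mul_assoc, ← pow_succ, pow_succ']
    congr 1
    ring

lemma swap_pow {R : Type*} [CommRing R] {M : Type*} [Ring M] [Algebra R M]
    {P Q : M} {c : R} (h : Q * P = c • (P * Q)) (n m : ℕ) :
    Q ^ n * P ^ m = c ^ (m * n) • (P ^ m * Q ^ n) := by
  induction m with
  | zero => simp
  | succ m ih =>
    rw [pow_succ, ← mul_assoc, ih, smul_mul_assoc, mul_assoc, swap_pow_left h n,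
      mul_smul_comm, smul_smul, ← mul_assoc, ← pow_succ, ← pow_add]
    congr 2
    ring

lemma ZX_comm : pauliZ d * pauliX d = zeta d • (pauliX d * pauliZ d) := by
  rw [pauliZ_eq]
  ext a b
  rw [Matrix.smul_apply, Matrix.diagonal_mul, Matrix.mul_diagonal]
  simp only [pauliX, Matrix.of_apply]
  by_cases h : a = b + 1
  · subst h
    simp only [if_true, mul_one, one_mul, smul_eq_mul, ← pow_succ']
    rw [← zeta_pow_mod ((b : ℕ) + 1)]
    congr 1
    rw [Fin.add_def]
    simp only [Fin.val_one']
    exact Nat.ModEq.add_left _ (Nat.mod_modEq 1 d)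
  · simp [h]

lemma Z_pow (n : ℕ) : pauliZ d ^ n = Matrix.diagonal fun a : Fin d => zeta d ^ ((a : ℕ) * n) := by
  rw [pauliZ_eq, Matrix.diagonal_pow]
  ext a b
  by_cases h : a = b
  · subst h
    rw [Matrix.diagonal_apply_eq, Matrix.diagonal_apply_eq, Pi.pow_apply, ← pow_mul]
  · rw [Matrix.diagonal_apply_ne _ h, Matrix.diagonal_apply_ne _ h]

lemma pauliZ_pow_d : pauliZ d ^ d = 1 := by
  rw [Z_pow]
  have : (fun a : Fin d => zeta d ^ ((a : ℕ) * d)) = fun _ => (1 : ℂ) := by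
    funext a
    rw [mul_comm, pow_mul, zeta_pow_d, one_pow]
  rw [this, Matrix.diagonal_one]

lemma pauliZ_unitary : pauliZ d ∈ Matrix.unitaryGroup (Fin d) ℂ := by
  rw [Matrix.mem_unitaryGroup_iff', pauliZ_eq, Matrix.star_eq_conjTranspose,
    Matrix.diagonal_conjTranspose, Matrix.diagonal_mul_diagonal]
  have hz : ∀ a : Fin d, star ((fun x : Fin d => zeta d ^ (x : ℕ)) a) * zeta d ^ (a : ℕ) = 1 := by
    intro a
    rw [Complex.star_def, ← Complex.normSq_eq_conj_mul_self, Complex.normSq_eq_norm_sq, norm_pow,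
      zeta_abs, one_pow]
    norm_num
  ext a b
  by_cases h : a = b
  · subst h
    rw [Matrix.diagonal_apply_eq, Matrix.one_apply_eq, Pi.star_apply]
    exact hz a
  · rw [Matrix.diagonal_apply_ne _ h, Matrix.one_apply_ne h]

lemma Zn_Xm (n m : ℕ) :
    pauliZ d ^ n * pauliX d ^ m = zeta d ^ (m * n) • (pauliX d ^ m * pauliZ d ^ n) :=
  swap_pow ZX_comm n m

lemma W_pow (m n k : ℕ) : (pauliX d ^ m * pauliZ d ^ n) ^ k
    = zeta d ^ (m * n * k.choose 2) • (pauliX d ^ (k * m) * pauliZ d ^ (k * n)) := by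
  induction k with
  | zero => simp
  | succ k ih =>
    rw [pow_succ, ih, smul_mul_assoc]
    have h1 : pauliX d ^ (k * m) * pauliZ d ^ (k * n) * (pauliX d ^ m * pauliZ d ^ n)
        = zeta d ^ (m * (k * n)) • (pauliX d ^ ((k + 1) * m) * pauliZ d ^ ((k + 1) * n)) := by
      rw [mul_assoc, ← mul_assoc (pauliZ d ^ (k * n)), Zn_Xm, smul_mul_assoc, mul_smul_comm]
      congr 1
      simp only [← mul_assoc]
      rw [← pow_add, mul_assoc, ← pow_add]
      congr 2 <;> ring
    rw [h1, smul_smul, ← pow_add]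
    congr 2
    rw [Nat.choose_succ_succ, Nat.choose_one_right]
    ring

omit [NeZero d] in
lemma pow_mod_eq {M : Type*} [Monoid M] {x : M} (h : x ^ d = 1) (n : ℕ) :
    x ^ (n % d) = x ^ n := by
  conv_rhs => rw [← Nat.div_add_mod n d, pow_add, pow_mul, h, one_pow, one_mul]

lemma W_pow_d (m n : ℕ) :
    (pauliX d ^ m * pauliZ d ^ n) ^ d = zeta d ^ (m * n * d.choose 2) • (1 : Matrix (Fin d) (Fin d) ℂ) := by
  rw [W_pow, mul_comm d m, mul_comm d n]
  congr 1
  rw [pow_mul', pow_mul', pauliX_pow_d, pauliZ_pow_d, one_pow, one_pow, one_mul]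

omit [NeZero d] in
lemma smul_unitary {c : ℂ} (hc : ‖c‖ = 1) {M : Matrix (Fin d) (Fin d) ℂ}
    (hM : M ∈ Matrix.unitaryGroup (Fin d) ℂ) : c • M ∈ Matrix.unitaryGroup (Fin d) ℂ := by
  rw [Matrix.mem_unitaryGroup_iff'] at hM ⊢
  rw [star_smul, smul_mul_smul_comm, hM]
  have : star c * c = 1 := by
    rw [Complex.star_def, ← Complex.normSq_eq_conj_mul_self, Complex.normSq_eq_norm_sq, hc]
    norm_num
  rw [this, one_smul]

omit [NeZero d] in
lemma ip_mulVec {M : Matrix (Fin d) (Fin d) ℂ} (hM : M ∈ Matrix.unitaryGroup (Fin d) ℂ)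
    (u w : Fin d → ℂ) : star (M *ᵥ u) ⬝ᵥ (M *ᵥ w) = star u ⬝ᵥ w := by
  rw [Matrix.mem_unitaryGroup_iff'] at hM
  rw [Matrix.star_mulVec, Matrix.dotProduct_mulVec, Matrix.vecMul_vecMul,
    ← Matrix.star_eq_conjTranspose, hM, Matrix.vecMul_one]

lemma exists_unit_eigenvector (M : Matrix (Fin d) (Fin d) ℂ) :
    ∃ (μ : ℂ) (v : Fin d → ℂ), star v ⬝ᵥ v = 1 ∧ M *ᵥ v = μ • v := by
  haveI : Nonempty (Fin d) := ⟨0⟩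
  obtain ⟨μ, hμ⟩ := Module.End.exists_eigenvalue (Matrix.toLin' M)
  obtain ⟨v, hv⟩ := hμ.exists_hasEigenvector
  have hMv : M *ᵥ v = μ • v := by
    have h := Module.End.mem_eigenspace_iff.mp hv.1
    rwa [Matrix.toLin'_apply] at h
  have hvne := hv.2
  set t : ℝ := ∑ i, Complex.normSq (v i) with ht
  have htpos : 0 < t := by
    obtain ⟨i, hi⟩ := Function.ne_iff.mp hvne
    apply Finset.sum_pos' (fun j _ => Complex.normSq_nonneg _)
    exact ⟨i, Finset.mem_univ i, Complex.normSq_pos.mpr hi⟩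
  set c : ℂ := (((Real.sqrt t)⁻¹ : ℝ) : ℂ) with hc
  refine ⟨μ, c • v, ?_, ?_⟩
  · have h1 : star v ⬝ᵥ v = (t : ℂ) := by
      rw [dotProduct]
      push_cast [ht]
      apply Finset.sum_congr rfl
      intro i _
      rw [Pi.star_apply, Complex.star_def, ← Complex.normSq_eq_conj_mul_self]
    rw [star_smul, smul_dotProduct, dotProduct_smul, h1, smul_eq_mul, smul_eq_mul,
      hc, Complex.star_def, Complex.conj_ofReal]
    rw [← Complex.ofReal_mul, ← Complex.ofReal_mul]
    norm_cast
    rw [← mul_assoc, ← mul_inv, Real.mul_self_sqrt htpos.le]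
    field_simp
  · rw [Matrix.mulVec_smul, hMv, smul_comm]

lemma pow_fin_succ {M : Type*} [Monoid M] {x : M} (h : x ^ d = 1) (j : Fin d) :
    x ^ (((j + 1 : Fin d)) : ℕ) = x ^ ((j : ℕ) + 1) := by
  rw [Fin.add_def, Fin.val_one', ← pow_mod_eq h ((j : ℕ) + 1)]
  congr 1
  exact Nat.ModEq.add_left _ (Nat.mod_modEq 1 d)

theorem det_one_implies_clifford (d : ℕ) [NeZero d] (α β γ δ : ℕ)
    (hdet : ((α : ℤ) * δ - (β : ℤ) * γ) ≡ 1 [ZMOD d]) :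
    ∃ U ∈ Matrix.unitaryGroup (Fin d) ℂ, ∃ c₁ c₂ : ℂ,
      ‖c₁‖ = 1 ∧ ‖c₂‖ = 1 ∧
      U * pauliX d * Uᴴ = c₁ • (pauliX d ^ α * pauliZ d ^ γ) ∧
      U * pauliZ d * Uᴴ = c₂ • (pauliX d ^ β * pauliZ d ^ δ) := by
  classical
  set A : Matrix (Fin d) (Fin d) ℂ := pauliX d ^ α * pauliZ d ^ γ with hA
  set B : Matrix (Fin d) (Fin d) ℂ := pauliX d ^ β * pauliZ d ^ δ with hB
  have hAu : A ∈ Matrix.unitaryGroup (Fin d) ℂ :=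
    mul_mem (pow_mem pauliX_unitary α) (pow_mem pauliZ_unitary γ)
  have hBu : B ∈ Matrix.unitaryGroup (Fin d) ℂ :=
    mul_mem (pow_mem pauliX_unitary β) (pow_mem pauliZ_unitary δ)
  -- determinant condition as a zeta power identity
  have hmod : (α * δ) ≡ (β * γ + 1) [MOD d] := by
    rw [Nat.modEq_iff_dvd]
    have h2 : (d : ℤ) ∣ 1 - ((α : ℤ) * δ - (β : ℤ) * γ) := Int.ModEq.dvd hdet
    push_cast
    convert h2 using 1
    ring
  have hζdet : zeta d ^ (α * δ) = zeta d ^ (β * γ + 1) := by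
    rw [← zeta_pow_mod (α * δ), ← zeta_pow_mod (β * γ + 1), hmod]
  -- commutation
  have hcomm : B * A = zeta d • (A * B) := by
    have h1 : B * A = zeta d ^ (α * δ) • (pauliX d ^ (β + α) * (pauliZ d ^ (δ + γ))) := by
      rw [hA, hB, mul_assoc, ← mul_assoc (pauliZ d ^ δ), Zn_Xm, smul_mul_assoc, mul_smul_comm]
      congr 1
      simp only [← mul_assoc]
      rw [← pow_add, mul_assoc, ← pow_add]
    have h2 : A * B = zeta d ^ (β * γ) • (pauliX d ^ (β + α) * (pauliZ d ^ (δ + γ))) := by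
      rw [hA, hB, mul_assoc, ← mul_assoc (pauliZ d ^ γ), Zn_Xm, smul_mul_assoc, mul_smul_comm]
      congr 1
      simp only [← mul_assoc]
      rw [← pow_add, mul_assoc, ← pow_add, add_comm α β, add_comm γ δ]
    rw [h1, h2, smul_smul, hζdet, pow_succ']
  -- scalars for d-th powers
  have hAd : A ^ d = zeta d ^ (α * γ * d.choose 2) • 1 := W_pow_d α γ
  have hBd : B ^ d = zeta d ^ (β * δ * d.choose 2) • 1 := W_pow_d β δ
  -- choice of c₁
  obtain ⟨c₁, hc₁⟩ := IsAlgClosed.exists_pow_nat_eq ((zeta d ^ (α * γ * d.choose 2))⁻¹)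
    (Nat.pos_of_ne_zero (NeZero.ne d))
  have habs1 : ‖c₁‖ = 1 := by
    apply abs_one_of_pow (d := d)
    rw [← norm_pow, hc₁, norm_inv, norm_pow, zeta_abs, one_pow]
    norm_num
  set A' : Matrix (Fin d) (Fin d) ℂ := c₁ • A with hA'
  have hA'u : A' ∈ Matrix.unitaryGroup (Fin d) ℂ := smul_unitary habs1 hAu
  have hA'd : A' ^ d = 1 := by
    rw [hA', smul_pow, hc₁, hAd, smul_smul, inv_mul_cancel₀ (pow_ne_zero _ zeta_ne_zero),
      one_smul]
  -- eigenvector of B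
  obtain ⟨μ, v, hv1, hv2⟩ := exists_unit_eigenvector B
  have hvne : v ≠ 0 := by
    intro h0
    rw [h0] at hv1
    simp at hv1
  have hμd : μ ^ d = zeta d ^ (β * δ * d.choose 2) := by
    have hBk : ∀ k, B ^ k *ᵥ v = μ ^ k • v := by
      intro k
      induction k with
      | zero => simp
      | succ k ih =>
        rw [pow_succ', ← Matrix.mulVec_mulVec, ih, Matrix.mulVec_smul, hv2, smul_smul,
          ← pow_succ]
    have h := hBk d
    rw [hBd, Matrix.smul_mulVec, Matrix.one_mulVec] at h
    have h3 : (μ ^ d - zeta d ^ (β * δ * d.choose 2)) • v = 0 := by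
      rw [sub_smul, ← h, sub_self]
    rcases smul_eq_zero.mp h3 with h4 | h4
    · exact sub_eq_zero.mp h4
    · exact absurd h4 hvne
  have habsμ : ‖μ‖ = 1 := by
    apply abs_one_of_pow (d := d)
    rw [← norm_pow, hμd, norm_pow, zeta_abs, one_pow]
  have hμne : μ ≠ 0 := by
    intro h
    rw [h] at habsμ
    simp at habsμ
  set c₂ : ℂ := μ⁻¹ with hc₂
  have habs2 : ‖c₂‖ = 1 := by
    rw [hc₂, norm_inv, habsμ]
    norm_num
  set B' : Matrix (Fin d) (Fin d) ℂ := c₂ • B with hB'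
  have hB'u : B' ∈ Matrix.unitaryGroup (Fin d) ℂ := smul_unitary habs2 hBu
  have hB'v : B' *ᵥ v = v := by
    rw [hB', Matrix.smul_mulVec, hv2, smul_smul, hc₂, inv_mul_cancel₀ hμne, one_smul]
  have hcomm' : B' * A' = zeta d • (A' * B') := by
    rw [hA', hB', smul_mul_smul_comm, hcomm, smul_smul, smul_mul_smul_comm, smul_smul]
    congr 1
    ring
  have hswap : ∀ k, B' * A' ^ k = zeta d ^ k • (A' ^ k * B') := by
    intro k
    have h := swap_pow hcomm' 1 k
    simpa using h
  -- the orthonormal family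
  set w : Fin d → Fin d → ℂ := fun j => A' ^ (j : ℕ) *ᵥ v with hw
  have hBw : ∀ j : Fin d, B' *ᵥ w j = zeta d ^ (j : ℕ) • w j := by
    intro j
    rw [hw]
    dsimp only
    rw [Matrix.mulVec_mulVec, hswap, Matrix.smul_mulVec, ← Matrix.mulVec_mulVec, hB'v]
  have hip : ∀ i j : Fin d, star (w i) ⬝ᵥ w j = if i = j then 1 else 0 := by
    intro i j
    by_cases h : i = j
    · subst h
      rw [if_pos rfl, hw]
      exact (ip_mulVec (pow_mem hA'u ((i : ℕ))) v v).trans hv1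
    · rw [if_neg h]
      have h1 : star (w i) ⬝ᵥ w j = star (B' *ᵥ w i) ⬝ᵥ (B' *ᵥ w j) := (ip_mulVec hB'u _ _).symm
      rw [hBw, hBw, star_smul, smul_dotProduct, dotProduct_smul, smul_eq_mul,
        smul_eq_mul, ← mul_assoc] at h1
      have hne : star (zeta d ^ (i : ℕ)) * zeta d ^ (j : ℕ) ≠ 1 := by
        intro he
        have hstar : zeta d ^ (i : ℕ) * star (zeta d ^ (i : ℕ)) = 1 := by
          rw [mul_comm, Complex.star_def, ← Complex.normSq_eq_conj_mul_self,
            Complex.normSq_eq_norm_sq, norm_pow, zeta_abs, one_pow]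
          norm_num
        have hji : zeta d ^ (j : ℕ) = zeta d ^ (i : ℕ) := by
          calc zeta d ^ (j : ℕ)
              = (zeta d ^ (i : ℕ) * star (zeta d ^ (i : ℕ))) * zeta d ^ (j : ℕ) := by
                rw [hstar, one_mul]
            _ = zeta d ^ (i : ℕ) * (star (zeta d ^ (i : ℕ)) * zeta d ^ (j : ℕ)) := by ring
            _ = zeta d ^ (i : ℕ) := by rw [he, mul_one]
        exact h (Fin.val_injective ((zeta_prim d).pow_inj j.isLt i.isLt hji)).symm
      have h5 : (star (zeta d ^ (i : ℕ)) * zeta d ^ (j : ℕ) - 1) * (star (w i) ⬝ᵥ w j) = 0 := by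
        linear_combination h1.symm
      rcases mul_eq_zero.mp h5 with h6 | h6
      · exact absurd (by linear_combination h6) hne
      · exact h6
  set U : Matrix (Fin d) (Fin d) ℂ := Matrix.of fun i j => w j i with hU
  have hUu : U ∈ Matrix.unitaryGroup (Fin d) ℂ := by
    rw [Matrix.mem_unitaryGroup_iff']
    ext i j
    rw [Matrix.star_eq_conjTranspose, Matrix.mul_apply]
    have he : ∀ k, Uᴴ i k * U k j = star (w i k) * w j k := by
      intro k
      rw [Matrix.conjTranspose_apply, hU]
      rfl
    rw [Finset.sum_congr rfl fun k _ => he k]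
    have : star (w i) ⬝ᵥ w j = if i = j then 1 else 0 := hip i j
    rw [dotProduct] at this
    simp only [Pi.star_apply] at this
    rw [this, Matrix.one_apply]
  have hUX : U * pauliX d = A' * U := by
    ext i j
    rw [Matrix.mul_apply, Matrix.mul_apply]
    have hL : ∑ k, U i k * pauliX d k j = w (j + 1) i := by
      simp only [pauliX, Matrix.of_apply, hU]
      rw [Finset.sum_eq_single (j + 1)]
      · simp
      · intro c _ hc
        simp [hc]
      · simp
    have hwsucc : w (j + 1) = A' *ᵥ w j := by
      rw [hw]
      dsimp only
      rw [pow_fin_succ hA'd j, pow_succ', ← Matrix.mulVec_mulVec]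
    rw [hL, hwsucc]
    rfl
  have hUZ : U * pauliZ d = B' * U := by
    ext i j
    rw [pauliZ_eq, Matrix.mul_diagonal, Matrix.mul_apply]
    have hR : ∑ k, B' i k * U k j = (B' *ᵥ w j) i := rfl
    rw [hR, hBw]
    simp only [Pi.smul_apply, smul_eq_mul, hU, Matrix.of_apply]
    ring
  have hUU : U * Uᴴ = 1 := by
    have := Matrix.mem_unitaryGroup_iff.mp hUu
    rwa [Matrix.star_eq_conjTranspose] at this
  refine ⟨U, hUu, c₁, c₂, habs1, habs2, ?_, ?_⟩
  · rw [hUX, mul_assoc, hUU, mul_one, hA']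
  · rw [hUZ, mul_assoc, hUU, mul_one, hB']
end

section
/- Let Z′, X′ be unitary operators on ℂ^d satisfying X′^d = Z′^d = 1 and Z′X′ = ω X′Z′ with ω = e^{2πi/d}. Then there exists a unitary U on ℂ^d with X′ = U X U† and Z′ = U Z U†, where X, Z are the standard generalized Pauli operators. -/
open Matrix

theorem weyl_pair_unitarily_equivalent (d : ℕ) [NeZero d]
    (X' Z' : Matrix (Fin d) (Fin d) ℂ)
    (hX'u : X' ∈ Matrix.unitaryGroup (Fin d) ℂ)
    (hZ'u : Z' ∈ Matrix.unitaryGroup (Fin d) ℂ)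
    (hXd : X' ^ d = 1) (hZd : Z' ^ d = 1)
    (hcomm : Z' * X' = Complex.exp (2 * Real.pi * Complex.I / d) • (X' * Z')) :
    ∃ U ∈ Matrix.unitaryGroup (Fin d) ℂ,
      X' = U * pauliX d * Uᴴ ∧ Z' = U * pauliZ d * Uᴴ := by
  classical
  have hd : d ≠ 0 := NeZero.ne d
  set ω : ℂ := Complex.exp (2 * Real.pi * Complex.I / d) with hωdef
  have hdc : (d : ℂ) ≠ 0 := Nat.cast_ne_zero.mpr hd
  have hωd : ω ^ d = 1 := by
    rw [hωdef, ← Complex.exp_nat_mul,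
      show (d : ℂ) * (2 * Real.pi * Complex.I / d) = 2 * Real.pi * Complex.I by
        field_simp]
    exact Complex.exp_two_pi_mul_I
  have hωprim : IsPrimitiveRoot ω d := Complex.isPrimitiveRoot_exp d hd
  have hconj : (starRingEnd ℂ) ω * ω = 1 := by
    rw [hωdef, ← Complex.exp_conj, ← Complex.exp_add]
    rw [show (starRingEnd ℂ) (2 * (Real.pi : ℂ) * Complex.I / d) +
          2 * Real.pi * Complex.I / d = 0 by
        simp [map_div₀, Complex.conj_I, map_ofNat]; ring]
    exact Complex.exp_zero
  have hconjpow : ∀ n : ℕ, (starRingEnd ℂ) (ω ^ n) * ω ^ n = 1 := by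
    intro n
    rw [map_pow, ← mul_pow, hconj, one_pow]
  -- commutation with powers
  have hcommn : ∀ n : ℕ, Z' * X' ^ n = ω ^ n • (X' ^ n * Z') := by
    intro n
    induction n with
    | zero => simp
    | succ n ih =>
      rw [pow_succ, ← mul_assoc, ih, smul_mul_assoc, mul_assoc, hcomm,
        mul_smul_comm, smul_smul, pow_succ]
      rw [mul_comm (ω ^ n) ω, mul_assoc]
  -- powers mod d
  have hpowmod : ∀ n : ℕ, X' ^ n = X' ^ (n % d) := by
    intro n
    conv_lhs => rw [← Nat.div_add_mod n d]
    rw [pow_add, pow_mul, hXd, one_pow, one_mul]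
  -- unitarity facts
  have hXn : ∀ n : ℕ, (X' ^ n)ᴴ * X' ^ n = 1 := by
    intro n
    have h : X' ^ n ∈ Matrix.unitaryGroup (Fin d) ℂ := pow_mem hX'u n
    simpa [Matrix.star_eq_conjTranspose] using Matrix.mem_unitaryGroup_iff'.mp h
  have hZ1 : Z'ᴴ * Z' = 1 := by
    simpa [Matrix.star_eq_conjTranspose] using Matrix.mem_unitaryGroup_iff'.mp hZ'u
  -- dot product preservation
  have hpres : ∀ (M : Matrix (Fin d) (Fin d) ℂ), Mᴴ * M = 1 →
      ∀ x y : Fin d → ℂ, star (M.mulVec x) ⬝ᵥ M.mulVec y = star x ⬝ᵥ y := by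
    intro M hM x y
    rw [Matrix.star_mulVec, Matrix.dotProduct_mulVec, Matrix.vecMul_vecMul, hM,
      Matrix.vecMul_one]
  -- eigenvector of Z'
  obtain ⟨μ, hμ⟩ := Module.End.exists_eigenvalue (Matrix.mulVecLin Z')
  obtain ⟨v, hv⟩ := hμ.exists_hasEigenvector
  have hZv : Z'.mulVec v = μ • v := hv.apply_eq_smul
  have hv0 : v ≠ 0 := hv.right
  have hZnv : ∀ n : ℕ, (Z' ^ n).mulVec v = μ ^ n • v := by
    intro n
    induction n with
    | zero => simp
    | succ n ih =>
      rw [pow_succ, ← Matrix.mulVec_mulVec, hZv, Matrix.mulVec_smul, ih,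
        smul_smul, ← pow_succ']
  have hμd : μ ^ d = 1 := by
    have h1 : (Z' ^ d).mulVec v = μ ^ d • v := hZnv d
    rw [hZd, Matrix.one_mulVec] at h1
    obtain ⟨i, hi⟩ := Function.ne_iff.mp hv0
    have h2 : v i = μ ^ d * v i := congrFun h1 i
    have h3 : (μ ^ d - 1) * v i = 0 := by linear_combination -h2
    rcases mul_eq_zero.mp h3 with h | h
    · exact sub_eq_zero.mp h
    · exact absurd h hi
  obtain ⟨k, hk, hωk⟩ := hωprim.eq_pow_of_pow_eq_one hμd
  -- the base vector w with eigenvalue 1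
  set w : Fin d → ℂ := (X' ^ (d - k)).mulVec v with hwdef
  have hZw : Z'.mulVec w = w := by
    rw [hwdef, Matrix.mulVec_mulVec, hcommn (d - k), Matrix.smul_mulVec,
      ← Matrix.mulVec_mulVec, hZv, Matrix.mulVec_smul, smul_smul, ← hωk,
      ← pow_add, Nat.sub_add_cancel hk.le, hωd, one_smul]
  have hw0 : w ≠ 0 := by
    intro h
    apply hv0
    have h3 : (X' ^ k).mulVec w = v := by
      rw [hwdef, Matrix.mulVec_mulVec, ← pow_add, Nat.add_sub_cancel' hk.le, hXd,
        Matrix.one_mulVec]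
    rw [h, Matrix.mulVec_zero] at h3
    exact h3.symm
  -- normalization
  set r : ℝ := ∑ i, Complex.normSq (w i) with hrdef
  have hr0 : 0 < r := by
    obtain ⟨i, hi⟩ := Function.ne_iff.mp hw0
    apply Finset.sum_pos' (fun j _ => Complex.normSq_nonneg _)
    exact ⟨i, Finset.mem_univ i, Complex.normSq_pos.mpr hi⟩
  have hdotw : star w ⬝ᵥ w = (r : ℂ) := by
    rw [hrdef]
    push_cast
    refine Finset.sum_congr rfl fun i _ => ?_
    simp [Complex.normSq_eq_conj_mul_self]
  set v0 : Fin d → ℂ := ((Real.sqrt r : ℂ))⁻¹ • w with hv0def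
  have hZv0 : Z'.mulVec v0 = v0 := by
    rw [hv0def, Matrix.mulVec_smul, hZw]
  have hsr : (Real.sqrt r : ℂ) ≠ 0 := by
    simp [Real.sqrt_eq_zero', not_le, hr0, ne_of_gt hr0]
  have hsq : ((Real.sqrt r : ℂ)) * (Real.sqrt r : ℂ) = (r : ℂ) := by
    rw [← Complex.ofReal_mul, Real.mul_self_sqrt hr0.le]
  have hnormv0 : star v0 ⬝ᵥ v0 = 1 := by
    rw [hv0def, star_smul, smul_dotProduct, dotProduct_smul, hdotw,
      smul_eq_mul, smul_eq_mul]
    have h4 : star ((Real.sqrt r : ℂ))⁻¹ = ((Real.sqrt r : ℂ))⁻¹ := by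
      simp [Complex.star_def, map_inv₀, Complex.conj_ofReal]
    rw [h4, ← mul_assoc, ← mul_inv, hsq,
      inv_mul_cancel₀ (Complex.ofReal_ne_zero.mpr hr0.ne')]
  -- the orthonormal basis
  set u : Fin d → Fin d → ℂ := fun a => (X' ^ (a : ℕ)).mulVec v0 with hudef
  have hZu : ∀ a : Fin d, Z'.mulVec (u a) = ω ^ (a : ℕ) • u a := by
    intro a
    rw [hudef]
    simp only
    rw [Matrix.mulVec_mulVec, hcommn, Matrix.smul_mulVec,
      ← Matrix.mulVec_mulVec, hZv0]
  have hmm : ∀ m n : ℕ, m % d = n % d → X' ^ m = X' ^ n := by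
    intro m n h
    rw [hpowmod m, hpowmod n, h]
  have hXu : ∀ a : Fin d, X'.mulVec (u a) = u (a + 1) := by
    intro a
    have hval : (((a + 1 : Fin d) : ℕ)) % d = ((a : ℕ) + 1) % d := by
      rw [Fin.val_add, Fin.val_one', Nat.mod_mod_of_dvd _ (dvd_refl d),
        Nat.add_mod (a : ℕ) 1 d, Nat.mod_eq_of_lt a.isLt]
    rw [hudef]
    simp only
    rw [Matrix.mulVec_mulVec, ← pow_succ', hmm ((a : ℕ) + 1) (((a + 1 : Fin d) : ℕ)) hval.symm]
  have hdotu : ∀ a b : Fin d, star (u a) ⬝ᵥ u b = if a = b then 1 else 0 := by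
    intro a b
    by_cases hab : a = b
    · subst hab
      simp only [if_true]
      rw [hudef]
      simp only
      rw [hpres _ (hXn (a : ℕ)), hnormv0]
    · simp only [hab, if_false]
      have h5 : star (u a) ⬝ᵥ u b =
          ((starRingEnd ℂ) (ω ^ (a : ℕ)) * ω ^ (b : ℕ)) * (star (u a) ⬝ᵥ u b) := by
        conv_lhs => rw [← hpres Z' hZ1 (u a) (u b), hZu a, hZu b]
        rw [star_smul, smul_dotProduct, dotProduct_smul,
          smul_eq_mul, smul_eq_mul]
        simp only [Complex.star_def]
        ring
      by_contra ht
      have h55 : ((starRingEnd ℂ) (ω ^ (a : ℕ)) * ω ^ (b : ℕ) - 1) * (star (u a) ⬝ᵥ u b) = 0 := by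
        linear_combination -h5
      have h6 : (starRingEnd ℂ) (ω ^ (a : ℕ)) * ω ^ (b : ℕ) = 1 := by
        rcases mul_eq_zero.mp h55 with h | h
        · exact sub_eq_zero.mp h
        · exact absurd h ht
      have h8 := hconjpow (a : ℕ)
      have h9 : (starRingEnd ℂ) (ω ^ (a : ℕ)) ≠ 0 := by
        intro h
        rw [h, zero_mul] at h8
        exact zero_ne_one h8
      have h7 : ω ^ (b : ℕ) = ω ^ (a : ℕ) :=
        mul_left_cancel₀ h9 (h6.trans h8.symm)
      exact hab (Fin.ext (hωprim.pow_inj a.isLt b.isLt h7.symm))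
  -- the unitary U
  set U : Matrix (Fin d) (Fin d) ℂ := Matrix.of (fun i a => u a i) with hUdef
  have hUU : star U * U = 1 := by
    ext a b
    rw [Matrix.mul_apply, Matrix.one_apply, ← hdotu a b]
    refine Finset.sum_congr rfl fun i _ => ?_
    simp [hUdef, Matrix.star_apply, dotProduct]
  have hUmem : U ∈ Matrix.unitaryGroup (Fin d) ℂ := Matrix.mem_unitaryGroup_iff'.mpr hUU
  have hUU' : U * Uᴴ = 1 := by
    rw [← Matrix.star_eq_conjTranspose]
    exact mul_eq_one_comm.mp hUU
  have hXU : X' * U = U * pauliX d := by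
    ext i a
    rw [Matrix.mul_apply, Matrix.mul_apply]
    have hl : ∑ j, X' i j * U j a = (X'.mulVec (u a)) i := by
      simp [Matrix.mulVec, dotProduct, hUdef]
    rw [hl, hXu a]
    rw [show ∑ b, U i b * pauliX d b a = u (a + 1) i by
      simp [hUdef, pauliX, Matrix.of_apply, mul_ite]]
  have hZU : Z' * U = U * pauliZ d := by
    ext i a
    rw [Matrix.mul_apply]
    have hl : ∑ j, Z' i j * U j a = (Z'.mulVec (u a)) i := by
      simp [Matrix.mulVec, dotProduct, hUdef]
    rw [hl, hZu a]
    rw [pauliZ, Matrix.mul_diagonal]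
    simp only [Pi.smul_apply, smul_eq_mul, hUdef, Matrix.of_apply]
    rw [mul_comm]
    congr 1
    rw [hωdef, ← Complex.exp_nat_mul]
    congr 1
    ring
  refine ⟨U, hUmem, ?_, ?_⟩
  · rw [← hXU, mul_assoc, hUU', mul_one]
  · rw [← hZU, mul_assoc, hUU', mul_one]
end

section
/- Let d ≥ 1 and suppose α, β are integers such that the residues m_i α + n_i β mod d (i = 1,…,ℓ) are pairwise distinct, where (m_i, n_i) are given pairs of integers. Then there exist integers α₂, β₂ with gcd(α₂, β₂) = 1 such that m_i α₂ + n_i β₂ mod d (i = 1,…,ℓ) are still pairwise distinct, and consequently there exist γ, δ with α₂δ − β₂γ ≡ 1 (mod d). -/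
lemma lift_coprime (a b N : ℤ) (hN : 0 < N) (h : Int.gcd a (Int.gcd b N) = 1) :
    ∃ a₂ b₂ : ℤ, a₂ ≡ a [ZMOD N] ∧ b₂ ≡ b [ZMOD N] ∧ Int.gcd a₂ b₂ = 1 := by
  rcases eq_or_ne a 0 with ha | ha
  · refine ⟨N, b, ?_, Int.ModEq.refl b, ?_⟩
    · exact (Int.modEq_iff_dvd.2 ⟨-1, by rw [ha]; ring⟩)
    · rw [Int.gcd_comm]
      simpa [ha, Int.gcd] using h
  · set S := a.natAbs.primeFactors.filter (fun p : ℕ => ¬ ((p:ℤ) ∣ b) ∧ ¬ ((p:ℤ) ∣ N)) with hS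
    set K : ℕ := ∏ p ∈ S, p with hK
    refine ⟨a, b + N * K, Int.ModEq.refl a, Int.modEq_iff_dvd.2 ⟨-K, by ring⟩, ?_⟩
    by_contra hg
    have hpp : (Int.gcd a (b + N*K)).minFac.Prime := Nat.minFac_prime hg
    set p := (Int.gcd a (b + N*K)).minFac with hp
    have hpd : (p:ℤ) ∣ (Int.gcd a (b+N*K) : ℤ) := Int.natCast_dvd_natCast.2 (Nat.minFac_dvd _)
    have hpa : (p:ℤ) ∣ a := hpd.trans (Int.gcd_dvd_left _ _)
    have hpb2 : (p:ℤ) ∣ b + N*K := hpd.trans (Int.gcd_dvd_right _ _)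
    have hppz : Prime (p:ℤ) := Nat.prime_iff_prime_int.1 hpp
    have hnot : ¬ ((p:ℤ) ∣ b ∧ (p:ℤ) ∣ N) := by
      rintro ⟨h1, h2⟩
      have : (p:ℤ) ∣ (Int.gcd b N : ℤ) := Int.dvd_coe_gcd h1 h2
      have : (p:ℤ) ∣ (Int.gcd a (Int.gcd b N) : ℤ) := Int.dvd_coe_gcd hpa this
      rw [h] at this
      exact hpp.one_lt.ne' (Nat.eq_one_of_dvd_one (Int.natCast_dvd_natCast.1 (by exact_mod_cast this)))
    have hmemS : ∀ q ∈ S, ¬ (q:ℤ) ∣ b := by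
      intro q hq
      exact (Finset.mem_filter.1 hq).2.1
    have hKdvd : (p:ℤ) ∣ (K:ℤ) → False := by
      intro hpK
      have : p ∣ K := Int.natCast_dvd_natCast.1 hpK
      obtain ⟨q, hq, hpq⟩ := (Nat.Prime.prime hpp).exists_mem_finset_dvd (hK ▸ this)
      have : p = q := ((Nat.prime_dvd_prime_iff_eq hpp
        (Nat.prime_of_mem_primeFactors (Finset.mem_filter.1 hq).1)).1 hpq)
      subst this
      exact hmemS p hq (by
        rcases em ((p:ℤ) ∣ b) with hb | hb
        · exact hb
        · exfalso
          -- in this branch p ∤ b; derive contradiction directly below instead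
          exact hb (by
            have hpN : ¬ (p:ℤ) ∣ N := (Finset.mem_filter.1 hq).2.2
            -- p ∣ K so p ∣ N*K, hence p ∣ b
            have : (p:ℤ) ∣ N * K := Dvd.dvd.mul_left hpK N
            exact (Int.dvd_add_right this).mp (by rwa [add_comm] at hpb2)))
    rcases em ((p:ℤ) ∣ b) with hb | hb
    · have hpN : ¬ (p:ℤ) ∣ N := fun h2 => hnot ⟨hb, h2⟩
      have hNK : (p:ℤ) ∣ N * K := (Int.dvd_add_right hb).mp hpb2
      rcases hppz.dvd_mul.1 hNK with h1 | h1
      · exact hpN h1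
      · exact hKdvd h1
    · have hpN : ¬ (p:ℤ) ∣ N := by
        intro h2
        have : (p:ℤ) ∣ N * K := Dvd.dvd.mul_right h2 K
        exact hb ((Int.dvd_add_right this).mp (by rwa [add_comm] at hpb2))
      have hmem : p ∈ S := Finset.mem_filter.2 ⟨Nat.mem_primeFactors.2
        ⟨hpp, (by simpa using Int.natAbs_dvd_natAbs.2 hpa), Int.natAbs_ne_zero.2 ha⟩, hb, hpN⟩
      have : (p:ℤ) ∣ (K:ℤ) := Int.natCast_dvd_natCast.2 (hK ▸ Finset.dvd_prod_of_mem _ hmem)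
      exact hKdvd this

theorem coprime_coefficients_exist (d ℓ : ℕ) (hd : 1 ≤ d)
    (m n : Fin ℓ → ℤ) (α β : ℤ)
    (hdist : Function.Injective fun i => ((m i * α + n i * β : ℤ) : ZMod d)) :
    ∃ α₂ β₂ : ℤ, Int.gcd α₂ β₂ = 1 ∧
      (Function.Injective fun i => ((m i * α₂ + n i * β₂ : ℤ) : ZMod d)) ∧
      ∃ γ δ : ℤ, α₂ * δ - β₂ * γ ≡ 1 [ZMOD d] := by
  set g : ℕ := Int.gcd α (Int.gcd β (d:ℤ)) with hg
  have hdz : (d:ℤ) ≠ 0 := by exact_mod_cast Nat.one_le_iff_ne_zero.1 hd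
  have hg0 : g ≠ 0 := by
    intro h0
    have := Int.gcd_eq_zero_iff.1 h0
    have := Int.gcd_eq_zero_iff.1 (by exact_mod_cast this.2 : Int.gcd β (d:ℤ) = 0)
    exact hdz this.2
  have hGα : (g:ℤ) ∣ α := Int.gcd_dvd_left _ _
  have hGβ : (g:ℤ) ∣ β := (Int.gcd_dvd_right _ _).trans (Int.gcd_dvd_left _ _)
  have hGd : (g:ℤ) ∣ (d:ℤ) := (Int.gcd_dvd_right _ _).trans (Int.gcd_dvd_right _ _)
  obtain ⟨α', hα'⟩ := hGα
  obtain ⟨β', hβ'⟩ := hGβ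
  obtain ⟨D', hD'⟩ := hGd
  have hD'pos : 0 < D' := by
    rcases lt_trichotomy D' 0 with h1 | h1 | h1
    · nlinarith [Int.natCast_pos.2 (Nat.pos_of_ne_zero hg0), Int.natCast_pos.2 (Nat.lt_of_lt_of_le Nat.zero_lt_one hd), hD' ▸ (Int.natCast_pos.2 (Nat.lt_of_lt_of_le Nat.zero_lt_one hd))]
    · exfalso; apply hdz; rw [hD', h1, mul_zero]
    · exact h1
  have hgcd' : Int.gcd α' (Int.gcd β' D') = 1 := by
    have h1 : Int.gcd β (d:ℤ) = g * Int.gcd β' D' := by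
      rw [hβ', hD', Int.gcd_mul_left, Int.natAbs_natCast]
    have h2 : g = g * Int.gcd α' (Int.gcd β' D') := by
      conv_lhs => rw [hg, hα', h1]
      rw [Nat.cast_mul, Int.gcd_mul_left, Int.natAbs_natCast]
    have h3 := h2
    nlinarith [Nat.pos_of_ne_zero hg0, Nat.le_of_eq h3, Int.gcd α' (Int.gcd β' D')]
  obtain ⟨α₂, β₂, hα₂, hβ₂, hcop⟩ := lift_coprime α' β' D' hD'pos hgcd'
  refine ⟨α₂, β₂, hcop, ?_, ?_⟩
  · intro i j hij
    simp only at hij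
    have hij' : m i * α₂ + n i * β₂ ≡ m j * α₂ + n j * β₂ [ZMOD (d:ℤ)] :=
      (ZMod.intCast_eq_intCast_iff _ _ _).1 hij
    have hdvd : D' ∣ (d:ℤ) := ⟨(g:ℤ), by rw [hD']; ring⟩
    have h3 : m i * α' + n i * β' ≡ m j * α' + n j * β' [ZMOD D'] := by
      have h4 := (hij'.of_dvd hdvd)
      calc m i * α' + n i * β' ≡ m i * α₂ + n i * β₂ [ZMOD D'] :=
            ((hα₂.symm.mul_left (m i)).add (hβ₂.symm.mul_left (n i))).symm.symm
        _ ≡ m j * α₂ + n j * β₂ [ZMOD D'] := h4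
        _ ≡ m j * α' + n j * β' [ZMOD D'] := (hα₂.mul_left (m j)).add (hβ₂.mul_left (n j))
    have h5 : m i * α + n i * β ≡ m j * α + n j * β [ZMOD (d:ℤ)] := by
      have h6 := h3.mul_left' (c := (g:ℤ))
      rw [← hD'] at h6
      calc m i * α + n i * β = (g:ℤ) * (m i * α' + n i * β') := by rw [hα', hβ']; ring
        _ ≡ (g:ℤ) * (m j * α' + n j * β') [ZMOD (d:ℤ)] := h6
        _ = m j * α + n j * β := by rw [hα', hβ']; ring
    exact hdist ((ZMod.intCast_eq_intCast_iff _ _ _).2 h5)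
  · have hc : IsCoprime α₂ β₂ := Int.isCoprime_iff_gcd_eq_one.2 hcop
    obtain ⟨u, v, huv⟩ := hc
    exact ⟨-v, u, by rw [show α₂ * u - β₂ * (-v) = u * α₂ + v * β₂ by ring, huv]⟩
end

section
/- Let d be prime and (m_i, n_i), i = 1,…,d, be distinct pairs in (ℤ/dℤ)². Suppose there is a unit vector |φ⟩ ∈ ℂ^d such that the d vectors X^{m_i}Z^{n_i}|φ⟩ are pairwise orthogonal. Then there exist integers α, β such that m_i α + n_i β (i = 1,…,d) are pairwise distinct modulo d. -/
open Matrix ComplexConjugate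

namespace OWD
open Fin.NatCast
variable (d : ℕ) [NeZero d]
set_option linter.unusedSectionVars false

noncomputable def zt : ℂ := Complex.exp (2 * Real.pi * Complex.I / d)

lemma hprim : IsPrimitiveRoot (zt d) d := Complex.isPrimitiveRoot_exp d (NeZero.ne d)

noncomputable def eP (k : ZMod d) : ℂ := zt d ^ k.val

lemma zt_pow_d : zt d ^ d = 1 := (hprim d).pow_eq_one

lemma eP_natCast (s : ℕ) : eP d (s : ZMod d) = zt d ^ s := by
  rw [eP, ZMod.val_natCast]
  conv_rhs => rw [← Nat.div_add_mod s d]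
  rw [pow_add, pow_mul, zt_pow_d, one_pow, one_mul]

lemma val_natCast_eq (a : ZMod d) : ((a.val : ℕ) : ZMod d) = a :=
  ZMod.natCast_rightInverse a

lemma eP_add (a b : ZMod d) : eP d (a + b) = eP d a * eP d b := by
  have h : ((a.val + b.val : ℕ) : ZMod d) = a + b := by
    push_cast [val_natCast_eq]; ring
  rw [← h, eP_natCast, pow_add, eP, eP]

lemma eP_zero : eP d 0 = 1 := by
  simp [eP, ZMod.val_zero]

lemma eP_mul_eP_neg (a : ZMod d) : eP d a * eP d (-a) = 1 := by
  rw [← eP_add]; simp [eP_zero]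

lemma abs_eP (a : ZMod d) : ‖eP d a‖ = 1 := by
  have h : (2 * Real.pi * Complex.I / d) = ((2 * Real.pi / d : ℝ) : ℂ) * Complex.I := by
    push_cast; ring
  rw [eP, norm_pow, zt, h, Complex.norm_exp_ofReal_mul_I, one_pow]

lemma conj_eP (a : ZMod d) : conj (eP d a) = eP d (-a) := by
  have h1 : eP d (-a) = (eP d a)⁻¹ :=
    eq_inv_of_mul_eq_one_left (by rw [mul_comm]; exact eP_mul_eP_neg d a)
  rw [h1, Complex.inv_eq_conj (abs_eP d a)]

lemma eP_ne_one (t : ZMod d) (ht : t ≠ 0) : eP d t ≠ 1 := by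
  have h0 : 0 < t.val := Nat.pos_of_ne_zero (fun h =>
    ht (by rw [← val_natCast_eq d t, h, Nat.cast_zero]))
  exact (hprim d).pow_ne_one_of_pos_of_lt h0.ne' t.val_lt

lemma sum_eP_mul (t : ZMod d) :
    ∑ v : ZMod d, eP d (v * t) = if t = 0 then (d : ℂ) else 0 := by
  split_ifs with h
  · subst h; simp [eP_zero, ZMod.card]
  · set S := ∑ v : ZMod d, eP d (v * t) with hS
    have hshift : S * eP d t = S := by
      rw [hS, Finset.sum_mul]
      rw [show ∑ v : ZMod d, eP d (v * t) * eP d t = ∑ v : ZMod d, eP d ((v + 1) * t) by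
        apply Finset.sum_congr rfl; intro v _; rw [add_mul, one_mul, eP_add]]
      exact Fintype.sum_equiv (Equiv.addRight 1) _ _ (fun v => rfl)
    have := mul_eq_zero.mp (by linear_combination hshift : S * (eP d t - 1) = 0)
    rcases this with h1 | h2
    · exact h1
    · exact absurd (by linear_combination h2) (eP_ne_one d t h)

lemma sum_zmod_eq_sum_range {M : Type*} [AddCommMonoid M] (f : ZMod d → M) :
    ∑ k : ZMod d, f k = ∑ j ∈ Finset.range d, f (j : ZMod d) := by
  exact Finset.sum_nbij' (fun k => k.val) (fun j => (j : ZMod d))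
    (fun k _ => Finset.mem_range.mpr k.val_lt) (fun j _ => Finset.mem_univ _)
    (fun k _ => val_natCast_eq d k)
    (fun j hj => ZMod.val_cast_of_lt (Finset.mem_range.mp hj))
    (fun k _ => by rw [val_natCast_eq d k])

open Polynomial in
lemma inj_of_sum_eP_eq_zero (hd : d.Prime) (S : Fin d → ZMod d)
    (hsum : ∑ i, eP d (S i) = 0) : Function.Injective S := by
  classical
  have hd2 : 2 ≤ d := hd.two_le
  set c : ZMod d → ℕ := fun k => (Finset.univ.filter (fun i => S i = k)).card with hc
  have hc_sum : ∑ k : ZMod d, c k = d := by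
    rw [← Finset.card_eq_sum_card_fiberwise (fun i (_ : i ∈ Finset.univ) => Finset.mem_univ (S i))]
    simp
  have hc_zeta : ∑ k : ZMod d, (c k : ℂ) * zt d ^ k.val = 0 := by
    rw [← hsum, ← Finset.sum_fiberwise_of_maps_to (fun i (_ : i ∈ Finset.univ) => Finset.mem_univ (S i))
      (fun i => eP d (S i))]
    apply Finset.sum_congr rfl
    intro k _
    rw [show ∑ i ∈ Finset.univ.filter (fun i => S i = k), eP d (S i)
        = ∑ _i ∈ Finset.univ.filter (fun i => S i = k), eP d k from
      Finset.sum_congr rfl (fun i hi => by rw [(Finset.mem_filter.mp hi).2])]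
    rw [Finset.sum_const, nsmul_eq_mul, eP]
  set b : ℕ → ℕ := fun j => c ((j : ZMod d)) with hb
  have hb_sum : ∑ j ∈ Finset.range d, b j = d := by
    rw [← sum_zmod_eq_sum_range d (fun k => c k)]; exact hc_sum
  have hb_zeta : ∑ j ∈ Finset.range d, (b j : ℂ) * zt d ^ j = 0 := by
    rw [sum_zmod_eq_sum_range d (fun k => (c k : ℂ) * zt d ^ k.val)] at hc_zeta
    rw [← hc_zeta]
    apply Finset.sum_congr rfl
    intro j hj
    rw [ZMod.val_cast_of_lt (Finset.mem_range.mp hj)]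
  have hgeom : ∑ j ∈ Finset.range d, zt d ^ j = 0 :=
    (hprim d).geom_sum_eq_zero hd.one_lt
  set r : ℕ := b (d - 1) with hr
  set Q : ℚ[X] := ∑ j ∈ Finset.range (d - 1), monomial j ((b j : ℚ) - r) with hQ
  have hdd : d - 1 + 1 = d := by omega
  have heval : aeval (zt d) Q = 0 := by
    rw [hQ, map_sum]
    have : ∀ j ∈ Finset.range (d - 1),
        aeval (zt d) (monomial j ((b j : ℚ) - r)) = ((b j : ℂ) - r) * zt d ^ j := by
      intro j _
      rw [aeval_monomial]
      push_cast
      ring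
    rw [Finset.sum_congr rfl this]
    have hfull : ∑ j ∈ Finset.range d, ((b j : ℂ) - r) * zt d ^ j = 0 := by
      have : ∀ j ∈ Finset.range d, ((b j : ℂ) - r) * zt d ^ j
          = (b j : ℂ) * zt d ^ j - r * zt d ^ j := by intro j _; ring
      rw [Finset.sum_congr rfl this, Finset.sum_sub_distrib, hb_zeta, ← Finset.mul_sum, hgeom]
      ring
    have hsplit := Finset.sum_range_succ (fun j => ((b j : ℂ) - r) * zt d ^ j) (d - 1)
    rw [hdd] at hsplit
    have hlast : ((b (d - 1) : ℂ) - r) * zt d ^ (d - 1) = 0 := by simp [hr]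
    linear_combination -hsplit + hfull - hlast
  have hQ0 : Q = 0 := by
    by_contra hQ0
    have hdvd := minpoly.dvd ℚ (zt d) heval
    have hle := Polynomial.natDegree_le_of_dvd hdvd hQ0
    have hmin : (minpoly ℚ (zt d)).natDegree = d - 1 := by
      rw [← Polynomial.cyclotomic_eq_minpoly_rat (hprim d) (NeZero.pos d),
        Polynomial.natDegree_cyclotomic, Nat.totient_prime hd]
    have hQdeg : Q.natDegree ≤ d - 2 := by
      rw [hQ]
      apply Polynomial.natDegree_sum_le_of_forall_le
      intro j hj
      exact le_trans (Polynomial.natDegree_monomial_le _) (by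
        have := Finset.mem_range.mp hj; omega)
    omega
  have hball : ∀ j < d, b j = r := by
    intro j hj
    rcases Nat.lt_or_ge j (d - 1) with h | h
    · have hco : Q.coeff j = (b j : ℚ) - r := by
        rw [hQ, Polynomial.finset_sum_coeff]
        rw [Finset.sum_eq_single j (fun j' _ hne => by
          rw [Polynomial.coeff_monomial, if_neg hne]) (fun habs =>
          absurd (Finset.mem_range.mpr h) habs)]
        rw [Polynomial.coeff_monomial, if_pos rfl]
      rw [hQ0, Polynomial.coeff_zero] at hco
      have : (b j : ℚ) = r := by linarith [hco.symm]
      exact_mod_cast this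
    · have : j = d - 1 := by omega
      rw [this]
  have hr1 : r = 1 := by
    have : ∑ j ∈ Finset.range d, b j = d * r := by
      rw [Finset.sum_congr rfl (fun j hj => hball j (Finset.mem_range.mp hj)),
        Finset.sum_const, Finset.card_range, smul_eq_mul]
    have hdr : d * r = d := by rw [← this, hb_sum]
    have h2 := Nat.eq_of_mul_eq_mul_left (show 0 < d by omega)
      (show d * r = d * 1 by rw [mul_one]; exact hdr)
    exact h2
  have hfib : ∀ k : ZMod d, c k = 1 := by
    intro k
    have : c k = b k.val := by rw [hb]; simp only [val_natCast_eq]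
    rw [this, hball k.val k.val_lt, hr1]
  intro i j hij
  have h1 : (Finset.univ.filter (fun i' => S i' = S i)).card ≤ 1 := le_of_eq (hfib (S i))
  exact Finset.card_le_one.mp h1 i (Finset.mem_filter.mpr ⟨Finset.mem_univ _, rfl⟩)
    j (Finset.mem_filter.mpr ⟨Finset.mem_univ _, hij.symm⟩)

/-! ### Matrix action -/

lemma pauliX_mulVec (w : Fin d → ℂ) (a : Fin d) :
    (pauliX d).mulVec w a = w (a - 1) := by
  simp only [pauliX, Matrix.mulVec, dotProduct, Matrix.of_apply]
  rw [Finset.sum_eq_single (a - 1)]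
  · rw [if_pos (by rw [sub_add_cancel]), one_mul]
  · intro b _ hb
    rw [if_neg (fun h => hb (eq_sub_iff_add_eq.mpr h.symm)), zero_mul]
  · intro h; exact absurd (Finset.mem_univ _) h

lemma pauliX_pow_mulVec (k : ℕ) (w : Fin d → ℂ) (a : Fin d) :
    (pauliX d ^ k).mulVec w a = w (a - (k : Fin d)) := by
  induction k generalizing w a with
  | zero => simp
  | succ k ih =>
    rw [pow_succ, ← Matrix.mulVec_mulVec, ih, pauliX_mulVec]
    congr 1
    push_cast
    abel

lemma pauliZ_mulVec (w : Fin d → ℂ) (a : Fin d) :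
    (pauliZ d).mulVec w a = zt d ^ (a : ℕ) * w a := by
  rw [pauliZ, Matrix.mulVec_diagonal]
  congr 1
  rw [zt, ← Complex.exp_nat_mul]
  congr 1
  ring

lemma pauliZ_pow_mulVec (l : ℕ) (w : Fin d → ℂ) (a : Fin d) :
    (pauliZ d ^ l).mulVec w a = zt d ^ (l * (a : ℕ)) * w a := by
  induction l generalizing w with
  | zero => simp
  | succ l ih =>
    rw [pow_succ, ← Matrix.mulVec_mulVec, ih, pauliZ_mulVec]
    rw [← mul_assoc, ← pow_add]
    congr 2
    ring

lemma pauliXZ_mulVec (k l : ℕ) (w : Fin d → ℂ) (a : Fin d) :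
    ((pauliX d ^ k * pauliZ d ^ l).mulVec w) a
      = zt d ^ (l * Fin.val (a - (k : Fin d))) * w (a - (k : Fin d)) := by
  rw [← Matrix.mulVec_mulVec, pauliX_pow_mulVec, pauliZ_pow_mulVec]

/-! ### Fin/ZMod transfer -/

def finZ (a : Fin d) : ZMod d := (a.val : ZMod d)

def toF (x : ZMod d) : Fin d := ⟨x.val, x.val_lt⟩

lemma toF_toZ (a : Fin d) : toF d (finZ d a) = a := by
  apply Fin.ext
  exact ZMod.val_cast_of_lt a.isLt

lemma toZ_toF (x : ZMod d) : finZ d (toF d x) = x := val_natCast_eq d x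

lemma toZ_bijective : Function.Bijective (finZ d) :=
  Function.bijective_iff_has_inverse.mpr ⟨toF d, toF_toZ d, toZ_toF d⟩

lemma toZ_add (a b : Fin d) : finZ d (a + b) = finZ d a + finZ d b := by
  unfold finZ
  rw [Fin.val_add, ZMod.natCast_mod]
  push_cast
  ring

lemma toZ_sub (a b : Fin d) : finZ d (a - b) = finZ d a - finZ d b := by
  have h := toZ_add d (a - b) b
  rw [sub_add_cancel] at h
  exact eq_sub_of_add_eq h.symm

lemma toZ_natCast (K : ℕ) : finZ d ((K : Fin d)) = (K : ZMod d) := by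
  unfold finZ
  rw [Fin.val_natCast, ZMod.natCast_mod]

lemma sum_toZ {M : Type*} [AddCommMonoid M] (f : ZMod d → M) :
    ∑ a : Fin d, f (finZ d a) = ∑ x : ZMod d, f x :=
  Fintype.sum_bijective (finZ d) (toZ_bijective d) _ _ (fun a => rfl)

end OWD

open OWD Fin.NatCast

theorem one_way_distinguishable_implies_F_equivalent (d : ℕ) [NeZero d]
    (hd : d.Prime) (m n : Fin d → ZMod d)
    (hpairs : Function.Injective fun i => (m i, n i))
    (φ : Fin d → ℂ) (hunit : star φ ⬝ᵥ φ = 1)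
    (horth : ∀ i j, i ≠ j →
      star ((pauliX d ^ (m i).val * pauliZ d ^ (n i).val).mulVec φ) ⬝ᵥ
        ((pauliX d ^ (m j).val * pauliZ d ^ (n j).val).mulVec φ) = 0) :
    ∃ α β : ℤ, Function.Injective fun i => m i * (α : ZMod d) + n i * (β : ZMod d) := by
  classical
  set Φ : ZMod d → ℂ := fun x => φ (toF d x) with hΦdef
  have hφΦ : ∀ a : Fin d, φ a = Φ (finZ d a) := fun a => by rw [hΦdef]; exact congrArg φ (toF_toZ d a).symm
  set ψ : Fin d → ZMod d → ℂ := fun i x => eP d (n i * (x - m i)) * Φ (x - m i) with hψdef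
  -- the matrix action in ZMod coordinates
  have hact : ∀ (i : Fin d) (a : Fin d),
      ((pauliX d ^ (m i).val * pauliZ d ^ (n i).val).mulVec φ) a = ψ i (finZ d a) := by
    intro i a
    rw [pauliXZ_mulVec]
    have e1 : finZ d (a - ((m i).val : Fin d)) = finZ d a - m i := by
      rw [toZ_sub, toZ_natCast, val_natCast_eq]
    have e2 : zt d ^ ((n i).val * Fin.val (a - ((m i).val : Fin d)))
        = eP d (n i * (finZ d a - m i)) := by
      rw [← eP_natCast]
      congr 1
      push_cast [val_natCast_eq]
      rw [show ((Fin.val (a - ((m i).val : Fin d)) : ℕ) : ZMod d)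
          = finZ d (a - ((m i).val : Fin d)) from rfl, e1]
    rw [e2, hφΦ, e1, hψdef]
  -- unit norm in ZMod coordinates
  have hunit' : ∑ x : ZMod d, conj (Φ x) * Φ x = 1 := by
    have h1 : star φ ⬝ᵥ φ = ∑ a : Fin d, conj (Φ (finZ d a)) * Φ (finZ d a) := by
      rw [dotProduct]
      exact Finset.sum_congr rfl (fun a _ => by
        rw [Pi.star_apply, hφΦ a, Complex.star_def])
    rw [← sum_toZ d (fun x => conj (Φ x) * Φ x), ← h1, hunit]
  -- orthogonality in ZMod coordinates
  have horth' : ∀ i j, i ≠ j → ∑ x : ZMod d, conj (ψ i x) * ψ j x = 0 := by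
    intro i j hij
    have h1 : star ((pauliX d ^ (m i).val * pauliZ d ^ (n i).val).mulVec φ) ⬝ᵥ
        ((pauliX d ^ (m j).val * pauliZ d ^ (n j).val).mulVec φ)
        = ∑ a : Fin d, conj (ψ i (finZ d a)) * ψ j (finZ d a) := by
      rw [dotProduct]
      exact Finset.sum_congr rfl (fun a _ => by
        rw [Pi.star_apply, hact i a, hact j a, Complex.star_def])
    rw [← sum_toZ d (fun x => conj (ψ i x) * ψ j x), ← h1]
    exact horth i j hij
  -- norm one of each ψ i
  have hψnorm : ∀ i, ∑ x : ZMod d, conj (ψ i x) * ψ i x = 1 := by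
    intro i
    have hpt : ∀ x, conj (ψ i x) * ψ i x = conj (Φ (x - m i)) * Φ (x - m i) := by
      intro x
      rw [hψdef]
      simp only [_root_.map_mul, conj_eP]
      have hone := eP_mul_eP_neg d (n i * (x - m i))
      linear_combination (conj (Φ (x - m i)) * Φ (x - m i)) * hone
    rw [Finset.sum_congr rfl (fun x _ => hpt x), ← hunit']
    exact Fintype.sum_equiv (Equiv.subRight (m i)) _ _ (fun x => rfl)
  -- orthonormal basis
  set f : Fin d → EuclideanSpace ℂ (ZMod d) := fun i => (WithLp.equiv 2 _).symm (ψ i) with hfdef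
  have hinner : ∀ i j, (inner ℂ (f i) (f j) : ℂ) = ∑ x : ZMod d, conj (ψ i x) * ψ j x := by
    intro i j
    rw [PiLp.inner_apply]
    exact Finset.sum_congr rfl (fun x _ => by rw [RCLike.inner_apply]; exact mul_comm _ _)
  have honf : Orthonormal ℂ f := by
    rw [orthonormal_iff_ite]
    intro i j
    rw [hinner]
    split_ifs with h
    · subst h; exact hψnorm i
    · exact horth' i j h
  have hcard : Fintype.card (Fin d) = Module.finrank ℂ (EuclideanSpace ℂ (ZMod d)) := by
    rw [finrank_euclideanSpace]
    simp [ZMod.card]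
  have hspan : ⊤ ≤ Submodule.span ℂ (Set.range f) := by
    have hB := (basisOfLinearIndependentOfCardEqFinrank honf.linearIndependent hcard).span_eq
    rw [coe_basisOfLinearIndependentOfCardEqFinrank] at hB
    rw [hB]
  set onb : OrthonormalBasis (Fin d) ℂ (EuclideanSpace ℂ (ZMod d)) :=
    OrthonormalBasis.mk honf hspan with honbdef
  have honb : ∀ i, onb i = f i := fun i => by rw [honbdef, OrthonormalBasis.coe_mk]
  -- completeness relation
  have H : ∀ a b : ZMod d, (∑ i, ψ i a * conj (ψ i b)) = if a = b then 1 else 0 := by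
    intro a b
    have hsum := onb.sum_inner_mul_inner (EuclideanSpace.single a 1) (EuclideanSpace.single b 1)
    have h2 : ∀ i, (inner ℂ (EuclideanSpace.single a (1:ℂ)) (onb i) : ℂ) * inner ℂ (onb i) (EuclideanSpace.single b (1:ℂ)) = ψ i a * conj (ψ i b) := by
      intro i
      rw [honb, EuclideanSpace.inner_single_left, EuclideanSpace.inner_single_right, _root_.map_one]
      show 1 * ψ i a * (1 * conj (ψ i b)) = _
      ring
    rw [Finset.sum_congr rfl (fun i _ => h2 i)] at hsum
    rw [hsum, EuclideanSpace.inner_single_left, _root_.map_one, one_mul, EuclideanSpace.single_apply]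
  -- the functions g and κ
  set g : ZMod d → ZMod d → ℂ := fun u v => ∑ x : ZMod d, eP d (-(v * x)) * Φ (x + u) * conj (Φ x) with hgdef
  set κ : ZMod d → ZMod d → ℂ := fun u v => ∑ i, eP d (n i * u - m i * v) with hκdef
  -- relation K1
  have K1 : ∀ u v : ZMod d, ¬(u = 0 ∧ v = 0) → κ u v * g u v = 0 := by
    intro u v huv
    have lhs_eq : ∑ b : ZMod d, eP d (-(v * b)) * (∑ i, ψ i (b + u) * conj (ψ i b))
        = κ u v * g u v := by
      rw [show ∀ S : ZMod d → ℂ, (∑ b : ZMod d, eP d (-(v*b)) * S b) = ∑ b : ZMod d, eP d (-(v*b)) * S b from fun _ => rfl]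
      calc ∑ b : ZMod d, eP d (-(v * b)) * (∑ i, ψ i (b + u) * conj (ψ i b))
          = ∑ b : ZMod d, ∑ i, eP d (-(v * b)) * (ψ i (b + u) * conj (ψ i b)) := by
            exact Finset.sum_congr rfl (fun b _ => Finset.mul_sum _ _ _)
        _ = ∑ i, ∑ b : ZMod d, eP d (-(v * b)) * (ψ i (b + u) * conj (ψ i b)) :=
            Finset.sum_comm
        _ = ∑ i, eP d (n i * u - m i * v) * g u v := by
            apply Finset.sum_congr rfl
            intro i _
            rw [show (∑ b : ZMod d, eP d (-(v * b)) * (ψ i (b + u) * conj (ψ i b)))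
                = ∑ x : ZMod d, eP d (-(v * (x + m i))) * (ψ i (x + m i + u) * conj (ψ i (x + m i))) from
              (Fintype.sum_equiv (Equiv.addRight (m i)) _ _ (fun x => rfl)).symm]
            rw [hgdef, Finset.mul_sum]
            apply Finset.sum_congr rfl
            intro x _
            have a1 : x + m i + u - m i = x + u := by ring
            have a2 : x + m i - m i = x := by ring
            rw [hψdef]
            simp only [_root_.map_mul, conj_eP]
            rw [a1, a2]
            rw [show eP d (-(v * (x + m i))) * (eP d (n i * (x + u)) * Φ (x + u) *
                (eP d (-(n i * x)) * conj (Φ x)))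
              = eP d (-(v * (x + m i)) + n i * (x + u) + -(n i * x)) * (Φ (x + u) * conj (Φ x)) by
                rw [eP_add, eP_add]; ring]
            rw [show eP d (n i * u - m i * v) * (eP d (-(v * x)) * Φ (x + u) * conj (Φ x))
              = eP d ((n i * u - m i * v) + -(v * x)) * (Φ (x + u) * conj (Φ x)) by
                rw [eP_add]; ring]
            congr 2
            ring
        _ = κ u v * g u v := by rw [hκdef, Finset.sum_mul]
    have rhs_eq : ∑ b : ZMod d, eP d (-(v * b)) * (∑ i, ψ i (b + u) * conj (ψ i b)) = 0 := by
      rw [Finset.sum_congr rfl (fun b (_ : b ∈ Finset.univ) => by rw [H (b + u) b])]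
      by_cases hu : u = 0
      · subst hu
        have hv : v ≠ 0 := fun hv => huv ⟨rfl, hv⟩
        rw [Finset.sum_congr rfl (fun b (_ : b ∈ Finset.univ) => by
          rw [if_pos (by ring : b + 0 = b), mul_one])]
        rw [show (∑ b : ZMod d, eP d (-(v * b))) = ∑ b : ZMod d, eP d (b * -v) from
          Finset.sum_congr rfl (fun b _ => by ring_nf)]
        rw [sum_eP_mul, if_neg (by simpa using hv)]
      · rw [Finset.sum_congr rfl (fun b (_ : b ∈ Finset.univ) => by
          rw [if_neg (fun h => hu (by linear_combination h)), mul_zero])]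
        exact Finset.sum_const_zero
    rw [← lhs_eq, rhs_eq]
  -- relation K2
  have K2 : ∑ u : ZMod d, ∑ v : ZMod d, g u v * conj (g u v) = (d : ℂ) := by
    have hconjg : ∀ u v, conj (g u v) = ∑ y : ZMod d, eP d (v * y) * conj (Φ (y + u)) * Φ y := by
      intro u v
      rw [hgdef, map_sum]
      apply Finset.sum_congr rfl
      intro y _
      simp only [_root_.map_mul, conj_eP, neg_neg, Complex.conj_conj]
    have hv_sum : ∀ u, ∑ v : ZMod d, g u v * conj (g u v)
        = (d : ℂ) * ∑ x : ZMod d, (conj (Φ x) * Φ x) * (conj (Φ (x + u)) * Φ (x + u)) := by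
      intro u
      calc ∑ v : ZMod d, g u v * conj (g u v)
          = ∑ v : ZMod d, ∑ x : ZMod d, ∑ y : ZMod d,
              (Φ (x + u) * conj (Φ x) * conj (Φ (y + u)) * Φ y) * eP d (v * (y - x)) := by
            apply Finset.sum_congr rfl
            intro v _
            rw [hconjg, hgdef, Finset.sum_mul_sum]
            apply Finset.sum_congr rfl
            intro x _
            apply Finset.sum_congr rfl
            intro y _
            rw [show eP d (-(v * x)) * Φ (x + u) * conj (Φ x) * (eP d (v * y) * conj (Φ (y + u)) * Φ y)
              = (Φ (x + u) * conj (Φ x) * conj (Φ (y + u)) * Φ y) * (eP d (-(v * x)) * eP d (v * y)) by ring,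
              ← eP_add]
            congr 2
            ring
        _ = ∑ x : ZMod d, ∑ y : ZMod d,
              (Φ (x + u) * conj (Φ x) * conj (Φ (y + u)) * Φ y) * ∑ v : ZMod d, eP d (v * (y - x)) := by
            rw [Finset.sum_comm]
            apply Finset.sum_congr rfl
            intro x _
            rw [Finset.sum_comm]
            apply Finset.sum_congr rfl
            intro y _
            rw [Finset.mul_sum]
        _ = (d : ℂ) * ∑ x : ZMod d, (conj (Φ x) * Φ x) * (conj (Φ (x + u)) * Φ (x + u)) := by
            rw [Finset.mul_sum]
            apply Finset.sum_congr rfl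
            intro x _
            rw [Finset.sum_eq_single x (fun y _ hy => by
              rw [sum_eP_mul, if_neg (fun h => hy (by linear_combination h)), mul_zero])
              (fun h => absurd (Finset.mem_univ x) h)]
            rw [sum_eP_mul, if_pos (by ring)]
            ring
    rw [Finset.sum_congr rfl (fun u (_ : u ∈ Finset.univ) => hv_sum u)]
    rw [← Finset.mul_sum, Finset.sum_comm]
    rw [Finset.sum_congr rfl (fun x (_ : x ∈ Finset.univ) => by
      rw [← Finset.mul_sum,
        show (∑ u : ZMod d, conj (Φ (x + u)) * Φ (x + u)) = ∑ y : ZMod d, conj (Φ y) * Φ y from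
          Fintype.sum_equiv (Equiv.addLeft x) _ _ (fun u => rfl),
        hunit', mul_one])]
    rw [hunit', mul_one]
  -- main case split
  by_cases hκ0 : ∃ u v : ZMod d, ¬(u = 0 ∧ v = 0) ∧ κ u v = 0
  · obtain ⟨u, v, _, h0⟩ := hκ0
    have hSinj : Function.Injective (fun i => n i * u - m i * v) := by
      apply inj_of_sum_eP_eq_zero d hd
      exact h0
    obtain ⟨α, hα⟩ := ZMod.intCast_surjective (n := d) (-v)
    obtain ⟨β, hβ⟩ := ZMod.intCast_surjective (n := d) u
    refine ⟨α, β, ?_⟩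
    intro i j hij
    apply hSinj
    simp only [hα, hβ] at hij
    show n i * u - m i * v = n j * u - m j * v
    linear_combination hij
  · push_neg at hκ0
    exfalso
    have hg0 : ∀ u v : ZMod d, ¬(u = 0 ∧ v = 0) → g u v = 0 := by
      intro u v huv
      rcases mul_eq_zero.mp (K1 u v huv) with h | h
      · exact absurd h (hκ0 u v (fun h0 hv0 => huv ⟨h0, hv0⟩))
      · exact h
    have hg00 : g 0 0 = 1 := by
      rw [show g 0 0 = ∑ x : ZMod d, eP d (-(0 * x)) * Φ (x + 0) * conj (Φ x) from rfl]
      rw [show (∑ x : ZMod d, eP d (-(0 * x)) * Φ (x + 0) * conj (Φ x))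
          = ∑ x : ZMod d, conj (Φ x) * Φ x from Finset.sum_congr rfl (fun x _ => by
        rw [zero_mul, neg_zero, eP_zero, add_zero]; ring)]
      exact hunit'
    have hsum1 : ∑ u : ZMod d, ∑ v : ZMod d, g u v * conj (g u v) = 1 := by
      rw [Finset.sum_eq_single 0 (fun u _ hu => by
        apply Finset.sum_eq_zero
        intro v _
        rw [hg0 u v (fun h => hu h.1), zero_mul]) (fun h => absurd (Finset.mem_univ _) h)]
      rw [Finset.sum_eq_single 0 (fun v _ hv => by
        rw [hg0 0 v (fun h => hv h.2), zero_mul]) (fun h => absurd (Finset.mem_univ _) h)]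
      rw [hg00, _root_.map_one, mul_one]
    rw [K2] at hsum1
    have : (d : ℂ) ≠ 1 := by
      intro h
      have : (d : ℂ) = ((1 : ℕ) : ℂ) := by rw [h]; norm_num
      exact absurd (Nat.cast_injective this) hd.ne_one
    exact this hsum1
end

section
/- Let d be prime and (m_i, n_i), i = 1,…,d, be distinct pairs in (ℤ/dℤ)². If there exist integers α, β such that m_i α + n_i β (i = 1,…,d) are pairwise distinct mod d, then there exists a unit vector |φ⟩ ∈ ℂ^d such that the d vectors X^{m_i}Z^{n_i}|φ⟩ are pairwise orthogonal (namely any eigenvector of X^{−β}Z^{α}). -/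
open Matrix

namespace PauliAux

noncomputable def om (d : ℕ) : ℂ := Complex.exp (2 * Real.pi * Complex.I / d)

variable (d : ℕ) [NeZero d]

lemma om_ne_zero : om d ≠ 0 := Complex.exp_ne_zero _

lemma om_prim : IsPrimitiveRoot (om d) d :=
  Complex.isPrimitiveRoot_exp d (NeZero.ne d)

lemma om_pow (k : ℕ) : om d ^ k = Complex.exp (2 * Real.pi * Complex.I * k / d) := by
  rw [om, ← Complex.exp_nat_mul]; congr 1; ring

lemma om_pow_mod (k : ℕ) : om d ^ (k % d) = om d ^ k := by
  conv_rhs => rw [← Nat.mod_add_div k d]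
  rw [pow_add, pow_mul, (om_prim d).pow_eq_one, one_pow, mul_one]

lemma om_pow_inj (a b : ℕ) : om d ^ a = om d ^ b ↔ (a : ZMod d) = (b : ZMod d) := by
  have hd : 0 < d := Nat.pos_of_ne_zero (NeZero.ne d)
  rw [ZMod.natCast_eq_natCast_iff, Nat.ModEq]
  constructor
  · intro h
    exact (om_prim d).pow_inj (Nat.mod_lt a hd) (Nat.mod_lt b hd)
      (by rw [om_pow_mod, om_pow_mod, h])
  · intro h
    rw [← om_pow_mod d a, ← om_pow_mod d b, h]

lemma conj_om_pow (k : ℕ) : star (om d ^ k) = (om d ^ k)⁻¹ := by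
  have h : star (om d) * om d = 1 := by
    rw [om, Complex.star_def, ← Complex.exp_conj, ← Complex.exp_add]
    have : (starRingEnd ℂ) (2 * Real.pi * Complex.I / d) =
        -(2 * Real.pi * Complex.I / d) := by
      simp [map_div₀, Complex.conj_I, map_ofNat]
      ring
    rw [this, neg_add_cancel, Complex.exp_zero]
  rw [star_pow, ← inv_pow]
  congr 1
  exact eq_inv_of_mul_eq_one_left h

lemma pauliZ_diag : pauliZ d = Matrix.diagonal (fun a : Fin d => om d ^ (a : ℕ)) := by
  unfold pauliZ
  refine congrArg Matrix.diagonal (funext fun a => ?_)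
  exact (om_pow d a.val).symm


lemma ZX : pauliZ d * pauliX d = om d • (pauliX d * pauliZ d) := by
  rw [pauliZ_diag]
  ext a b
  rw [Matrix.smul_apply, Matrix.diagonal_mul, Matrix.mul_diagonal]
  show om d ^ (a : ℕ) * pauliX d a b = om d • (pauliX d a b * om d ^ (b : ℕ))
  unfold pauliX
  simp only [Matrix.of_apply]
  by_cases h : a = b + 1
  · subst h
    rw [if_pos rfl]
    have hv : ((b + 1 : Fin d) : ℕ) = ((b : ℕ) + 1) % d := by
      rw [Fin.val_add, Fin.val_one']
      conv_rhs => rw [Nat.add_mod]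
      rw [Nat.add_mod (b : ℕ) (1 % d), Nat.mod_mod_of_dvd _ dvd_rfl]
    rw [hv, om_pow_mod, pow_succ]
    simp [smul_eq_mul]
    ring
  · rw [if_neg h]
    simp

lemma Z_Xpow (r : ℕ) : pauliZ d * pauliX d ^ r = om d ^ r • (pauliX d ^ r * pauliZ d) := by
  induction r with
  | zero => simp
  | succ r ih =>
    rw [pow_succ, ← mul_assoc, ih, smul_mul_assoc, mul_assoc, ZX, mul_smul_comm,
      smul_smul, ← pow_succ, pow_succ, mul_assoc]

lemma Zpow_Xpow (q r : ℕ) :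
    pauliZ d ^ q * pauliX d ^ r = om d ^ (q * r) • (pauliX d ^ r * pauliZ d ^ q) := by
  induction q with
  | zero => simp
  | succ q ih =>
    rw [pow_succ, mul_assoc, Z_Xpow, mul_smul_comm, ← mul_assoc, ih, smul_mul_assoc,
      smul_smul, ← pow_add, mul_assoc, ← pow_succ]
    ring_nf

lemma key (p q r s : ℕ) :
    (pauliX d ^ p * pauliZ d ^ q) * (pauliX d ^ r * pauliZ d ^ s) =
      om d ^ (q * r) • (pauliX d ^ (p + r) * pauliZ d ^ (q + s)) := by
  calc (pauliX d ^ p * pauliZ d ^ q) * (pauliX d ^ r * pauliZ d ^ s)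
      = pauliX d ^ p * (pauliZ d ^ q * pauliX d ^ r) * pauliZ d ^ s := by
        simp [mul_assoc]
    _ = om d ^ (q * r) • (pauliX d ^ (p + r) * pauliZ d ^ (q + s)) := by
        rw [Zpow_Xpow, mul_smul_comm, smul_mul_assoc, pow_add, pow_add]
        simp [mul_assoc]

lemma X_unitary : pauliX d ∈ Matrix.unitaryGroup (Fin d) ℂ := by
  rw [Matrix.mem_unitaryGroup_iff']
  ext a b
  rw [Matrix.mul_apply, Matrix.one_apply]
  simp only [Matrix.star_eq_conjTranspose, Matrix.conjTranspose_apply, pauliX, Matrix.of_apply]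
  simp [apply_ite, Finset.sum_ite_eq]
  rcases eq_or_ne a b with h | h
  · simp [h]
  · simp [h, Ne.symm h]


lemma Z_unitary : pauliZ d ∈ Matrix.unitaryGroup (Fin d) ℂ := by
  rw [Matrix.mem_unitaryGroup_iff', pauliZ_diag, Matrix.star_eq_conjTranspose,
    Matrix.diagonal_conjTranspose, Matrix.diagonal_mul_diagonal, ← Matrix.diagonal_one]
  refine congrArg Matrix.diagonal (funext fun a => ?_)
  simp only [Pi.star_apply, Pi.one_apply]
  rw [conj_om_pow]
  exact inv_mul_cancel₀ (pow_ne_zero _ (om_ne_zero d))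

lemma XZ_unitary (p q : ℕ) :
    pauliX d ^ p * pauliZ d ^ q ∈ Matrix.unitaryGroup (Fin d) ℂ :=
  mul_mem (pow_mem (X_unitary d) p) (pow_mem (Z_unitary d) q)

lemma unitary_dot {A : Matrix (Fin d) (Fin d) ℂ} (hA : A ∈ Matrix.unitaryGroup (Fin d) ℂ)
    (x y : Fin d → ℂ) : star (A.mulVec x) ⬝ᵥ (A.mulVec y) = star x ⬝ᵥ y := by
  have h1 : star A * A = 1 := hA.1
  rw [Matrix.star_mulVec, Matrix.dotProduct_mulVec, Matrix.vecMul_vecMul,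
    ← Matrix.star_eq_conjTranspose, h1, Matrix.vecMul_one]

end PauliAux

theorem F_equivalent_implies_one_way_distinguishable (d : ℕ) [NeZero d]
    (hd : d.Prime) (m n : Fin d → ZMod d)
    (hpairs : Function.Injective fun i => (m i, n i))
    (α β : ℤ)
    (hdist : Function.Injective fun i => m i * (α : ZMod d) + n i * (β : ZMod d)) :
    ∃ φ : Fin d → ℂ, star φ ⬝ᵥ φ = 1 ∧
      ∀ i j, i ≠ j →
        star ((pauliX d ^ (m i).val * pauliZ d ^ (n i).val).mulVec φ) ⬝ᵥ
          ((pauliX d ^ (m j).val * pauliZ d ^ (n j).val).mulVec φ) = 0 := by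
  classical
  have hd0 : 0 < d := Nat.pos_of_ne_zero (NeZero.ne d)
  haveI : Nonempty (Fin d) := ⟨⟨0, hd0⟩⟩
  set ω := PauliAux.om d with hω
  have hOm : ∀ k : ℕ, ω ^ k ≠ 0 := fun k => pow_ne_zero _ (PauliAux.om_ne_zero d)
  set a' : ℕ := ((α : ZMod d)).val with ha'
  set b' : ℕ := ((-(β : ZMod d))).val with hb'
  set A : Matrix (Fin d) (Fin d) ℂ := pauliX d ^ b' * pauliZ d ^ a' with hAdef
  have hAu : A ∈ Matrix.unitaryGroup (Fin d) ℂ := PauliAux.XZ_unitary d b' a'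
  obtain ⟨μ, hμ⟩ := Module.End.exists_eigenvalue (Matrix.mulVecLin A)
  obtain ⟨v, hv⟩ := hμ.exists_hasEigenvector
  have hv0 : v ≠ 0 := hv.2
  have hveq : A.mulVec v = μ • v := by
    have h := hv.apply_eq_smul
    simpa [Matrix.mulVecLin_apply] using h
  set S0 : ℝ := ∑ a, Complex.normSq (v a) with hS0
  have hS0pos : 0 < S0 := by
    obtain ⟨a, ha⟩ := Function.ne_iff.mp hv0
    refine Finset.sum_pos' (fun i _ => Complex.normSq_nonneg _) ⟨a, Finset.mem_univ a, ?_⟩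
    simpa [Complex.normSq_pos] using ha
  set c : ℂ := ((Real.sqrt S0 : ℝ) : ℂ)⁻¹ with hc
  set φ : Fin d → ℂ := c • v with hφ
  have hvv : star v ⬝ᵥ v = (S0 : ℂ) := by
    rw [hS0]
    push_cast
    simp only [dotProduct, Pi.star_apply]
    refine Finset.sum_congr rfl fun a _ => ?_
    rw [Complex.star_def, mul_comm]
    exact Complex.mul_conj (v a)
  have hsne : ((Real.sqrt S0 : ℝ) : ℂ) ≠ 0 := by
    simpa using (Real.sqrt_pos.mpr hS0pos).ne'
  have hs : ((Real.sqrt S0 : ℝ) : ℂ) * ((Real.sqrt S0 : ℝ) : ℂ) = (S0 : ℂ) := by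
    rw [← Complex.ofReal_mul, Real.mul_self_sqrt hS0pos.le]
  have hsc : star c = c := by
    rw [hc, star_inv₀, Complex.star_def, Complex.conj_ofReal]
  have hunit : star φ ⬝ᵥ φ = 1 := by
    rw [hφ, star_smul, smul_dotProduct, dotProduct_smul, hsc, hvv, smul_eq_mul, smul_eq_mul,
      hc, ← hs]
    field_simp
  have hφeq : A.mulVec φ = μ • φ := by
    rw [hφ, Matrix.mulVec_smul, hveq, smul_comm]
  have hμ1 : star μ * μ = 1 := by
    have h := PauliAux.unitary_dot d hAu φ φ
    rw [hφeq, star_smul, smul_dotProduct, dotProduct_smul, hunit, smul_eq_mul, smul_eq_mul,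
      mul_one] at h
    linear_combination h
  refine ⟨φ, hunit, ?_⟩
  intro i j hij
  set p : Fin d → ℕ := fun i => (m i).val with hp
  set q : Fin d → ℕ := fun i => (n i).val with hq
  set f : Fin d → ℕ := fun i => a' * p i with hf
  set e : Fin d → ℕ := fun i => q i * b' with he
  set B : Fin d → Matrix (Fin d) (Fin d) ℂ := fun i => pauliX d ^ p i * pauliZ d ^ q i with hB
  show star ((B i).mulVec φ) ⬝ᵥ ((B j).mulVec φ) = 0
  have hAB : ∀ i, A * B i = (ω ^ f i * (ω ^ e i)⁻¹) • (B i * A) := by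
    intro i
    have h1 := PauliAux.key d b' a' (p i) (q i)
    have h2 := PauliAux.key d (p i) (q i) b' a'
    rw [hAdef, hB]
    simp only []
    rw [h1, h2, smul_smul, add_comm b' (p i), add_comm a' (q i)]
    congr 1
    field_simp [hOm]
    rfl
  have hψeig : ∀ i, A.mulVec ((B i).mulVec φ) =
      ((ω ^ f i * (ω ^ e i)⁻¹) * μ) • ((B i).mulVec φ) := by
    intro i
    rw [Matrix.mulVec_mulVec, hAB i, Matrix.smul_mulVec, ← Matrix.mulVec_mulVec,
      hφeq, Matrix.mulVec_smul, smul_smul]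
  have h := PauliAux.unitary_dot d hAu ((B i).mulVec φ) ((B j).mulVec φ)
  rw [hψeig i, hψeig j, star_smul, smul_dotProduct, dotProduct_smul, smul_eq_mul,
    smul_eq_mul, ← mul_assoc] at h
  set S : ℂ := star ((B i).mulVec φ) ⬝ᵥ ((B j).mulVec φ) with hS
  have hne : ω ^ (e i + f j) ≠ ω ^ (f i + e j) := by
    rw [Ne, hω, PauliAux.om_pow_inj]
    intro hz
    push_cast [hf, he, hp, hq, ha', hb', ZMod.natCast_val, ZMod.cast_id] at hz
    exact hij (hdist (show (fun i => m i * (α : ZMod d) + n i * (β : ZMod d)) i =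
      (fun i => m i * (α : ZMod d) + n i * (β : ZMod d)) j by
        simp only []
        linear_combination -hz))
  have hstar : star (ω ^ f i * (ω ^ e i)⁻¹ * μ) * (ω ^ f j * (ω ^ e j)⁻¹ * μ) =
      ω ^ (e i + f j) / ω ^ (f i + e j) := by
    rw [star_mul', star_mul', star_inv₀, hω, PauliAux.conj_om_pow, PauliAux.conj_om_pow,
      inv_inv, div_eq_mul_inv, pow_add, pow_add, mul_inv]
    calc (PauliAux.om d ^ f i)⁻¹ * PauliAux.om d ^ e i * star μ *
          (PauliAux.om d ^ f j * (PauliAux.om d ^ e j)⁻¹ * μ)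
        = (star μ * μ) * ((PauliAux.om d ^ f i)⁻¹ * PauliAux.om d ^ e i * PauliAux.om d ^ f j *
            (PauliAux.om d ^ e j)⁻¹) := by ring
      _ = PauliAux.om d ^ e i * PauliAux.om d ^ f j *
            ((PauliAux.om d ^ f i)⁻¹ * (PauliAux.om d ^ e j)⁻¹) := by rw [hμ1]; ring
  rw [hstar] at h
  have hK : ω ^ (e i + f j) / ω ^ (f i + e j) ≠ 1 := by
    rw [Ne, div_eq_one_iff_eq (hOm _)]
    exact hne
  have hzero : (ω ^ (e i + f j) / ω ^ (f i + e j) - 1) * S = 0 := by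
    linear_combination h
  rcases mul_eq_zero.mp hzero with h' | h'
  · exact absurd (sub_eq_zero.mp h') hK
  · exact h'
end

section
/- Let d = d₁² and let φ ∈ ℂ^d be the unit vector with entries 1/√d₁ in the first d₁ coordinates and 0 elsewhere. Then the d states X^{μd₁}Z^{νd₁}φ, for 0 ≤ μ, ν ≤ d₁−1, are pairwise orthogonal (hence form an orthonormal basis of ℂ^d). -/
open Matrix

open Fin.NatCast Fin.CommRing

lemma pauliX_mulVec (d : ℕ) [NeZero d] (v : Fin d → ℂ) (a : Fin d) :
    (pauliX d).mulVec v a = v (a - 1) := by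
  simp only [pauliX, Matrix.mulVec, dotProduct, Matrix.of_apply]
  rw [Finset.sum_eq_single (a - 1)]
  · rw [if_pos (by rw [sub_add_cancel]), one_mul]
  · intro b _ hb
    rw [if_neg, zero_mul]
    intro h
    exact hb (by rw [h]; ring)
  · simp

lemma pauliX_pow_mulVec (d : ℕ) [NeZero d] (k : ℕ) (v : Fin d → ℂ) (a : Fin d) :
    (pauliX d ^ k).mulVec v a = v (a - (k : Fin d)) := by
  induction k generalizing v a with
  | zero => simp
  | succ n ih =>
    rw [pow_succ, ← Matrix.mulVec_mulVec, ih (pauliX d *ᵥ v), pauliX_mulVec]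
    congr 1
    push_cast
    ring

lemma pauliZ_pow_mulVec (d : ℕ) [NeZero d] (m : ℕ) (v : Fin d → ℂ) (a : Fin d) :
    (pauliZ d ^ m).mulVec v a
      = Complex.exp (2 * Real.pi * Complex.I * (a : ℕ) / d) ^ m * v a := by
  rw [pauliZ, Matrix.diagonal_pow, Matrix.mulVec_diagonal, Pi.pow_apply]

lemma geom_zero (d₁ : ℕ) (hd0 : 0 < d₁) (ν ν' : Fin d₁) (hν : ν ≠ ν') :
    ∑ j ∈ Finset.range d₁,
      Complex.exp (2 * Real.pi * Complex.I * (((ν' : ℕ) : ℂ) - ((ν : ℕ) : ℂ)) / d₁) ^ j = 0 := by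
  have hπ : ((Real.pi : ℝ) : ℂ) ≠ 0 := Complex.ofReal_ne_zero.mpr Real.pi_ne_zero
  have hdC : (d₁ : ℂ) ≠ 0 := Nat.cast_ne_zero.mpr hd0.ne'
  set ζ : ℂ := Complex.exp (2 * Real.pi * Complex.I * (((ν' : ℕ) : ℂ) - ((ν : ℕ) : ℂ)) / d₁) with hζ
  have hζd : ζ ^ d₁ = 1 := by
    rw [hζ, ← Complex.exp_nat_mul, Complex.exp_eq_one_iff]
    refine ⟨((ν' : ℕ) : ℤ) - ((ν : ℕ) : ℤ), ?_⟩
    push_cast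
    field_simp
  have hζ1 : ζ ≠ 1 := by
    intro h
    rw [hζ, Complex.exp_eq_one_iff] at h
    obtain ⟨n, hn⟩ := h
    have hkey : (((ν' : ℕ) : ℂ) - ((ν : ℕ) : ℂ)) = n * d₁ := by
      field_simp at hn
      have h2πI : (2 * (Real.pi : ℂ) * Complex.I) ≠ 0 := by
        simp [hπ, Complex.I_ne_zero]
      apply mul_left_cancel₀ h2πI
      linear_combination (2 * (Real.pi : ℂ) * Complex.I) * hn
    have h3 : ((ν' : ℕ) : ℤ) - ((ν : ℕ) : ℤ) = n * d₁ := by exact_mod_cast hkey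
    have hdvd : (d₁ : ℤ) ∣ ((ν' : ℕ) : ℤ) - ((ν : ℕ) : ℤ) := ⟨n, by rw [h3]; ring⟩
    have := Int.eq_zero_of_abs_lt_dvd hdvd (by
      have := ν.isLt; have := ν'.isLt
      rw [abs_lt]; constructor <;> [omega; omega])
    exact hν (Fin.ext (by omega))
  rw [geom_sum_eq hζ1, hζd, sub_self, zero_div]

theorem square_lattice_states_orthogonal (d₁ : ℕ) (hd₁ : 2 ≤ d₁)
    [NeZero (d₁ ^ 2)]
    (φ : Fin (d₁ ^ 2) → ℂ)
    (hφ : φ = fun a : Fin (d₁ ^ 2) => if a.val < d₁ then (1 / Real.sqrt d₁ : ℂ) else 0)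
    (μ ν μ' ν' : Fin d₁) (hne : (μ, ν) ≠ (μ', ν')) :
    star ((pauliX (d₁ ^ 2) ^ ((μ : ℕ) * d₁) * pauliZ (d₁ ^ 2) ^ ((ν : ℕ) * d₁)).mulVec φ) ⬝ᵥ
      ((pauliX (d₁ ^ 2) ^ ((μ' : ℕ) * d₁) * pauliZ (d₁ ^ 2) ^ ((ν' : ℕ) * d₁)).mulVec φ)
        = 0 := by
  have hd0 : 0 < d₁ := by omega
  have hdC : (d₁ : ℂ) ≠ 0 := Nat.cast_ne_zero.mpr hd0.ne'
  have hval : ∀ ρ : Fin d₁, (((ρ : ℕ) * d₁ : ℕ) : Fin (d₁ ^ 2)).val = (ρ : ℕ) * d₁ := by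
    intro ρ
    rw [Fin.val_natCast, Nat.mod_eq_of_lt]
    have := ρ.isLt
    nlinarith
  have hbound : ∀ (b : Fin (d₁ ^ 2)) (ρ : Fin d₁), b.val < d₁ →
      b.val + (ρ : ℕ) * d₁ < d₁ ^ 2 := by
    intro b ρ hb
    have := ρ.isLt
    nlinarith
  have hcomp : ∀ (ρ σ : Fin d₁) (a : Fin (d₁ ^ 2)),
      ((pauliX (d₁ ^ 2) ^ ((ρ : ℕ) * d₁) * pauliZ (d₁ ^ 2) ^ ((σ : ℕ) * d₁)).mulVec φ) a
      = Complex.exp (2 * Real.pi * Complex.I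
            * ((a - (((ρ : ℕ) * d₁ : ℕ) : Fin (d₁ ^ 2))).val : ℕ) / (d₁ ^ 2)) ^ ((σ : ℕ) * d₁)
        * φ (a - (((ρ : ℕ) * d₁ : ℕ) : Fin (d₁ ^ 2))) := by
    intro ρ σ a
    rw [← Matrix.mulVec_mulVec, pauliX_pow_mulVec, pauliZ_pow_mulVec]
    norm_cast
  simp only [dotProduct, Pi.star_apply, hcomp]
  by_cases hμ : μ = μ'
  · subst hμ
    have hν : ν ≠ ν' := by simpa using hne
    simp only [hφ]
    set F : ℕ → ℂ := fun j =>
      star (Complex.exp (2 * Real.pi * Complex.I * (j : ℂ) / (d₁ : ℂ) ^ 2) ^ ((ν : ℕ) * d₁)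
          * (if j < d₁ then (1 / Real.sqrt d₁ : ℂ) else 0))
        * (Complex.exp (2 * Real.pi * Complex.I * (j : ℂ) / (d₁ : ℂ) ^ 2) ^ ((ν' : ℕ) * d₁)
          * (if j < d₁ then (1 / Real.sqrt d₁ : ℂ) else 0)) with hF
    show ∑ x : Fin (d₁ ^ 2), F ((x - (((μ : ℕ) * d₁ : ℕ) : Fin (d₁ ^ 2))).val) = 0
    have h1 : ∑ x : Fin (d₁ ^ 2), F ((x - (((μ : ℕ) * d₁ : ℕ) : Fin (d₁ ^ 2))).val)
        = ∑ x : Fin (d₁ ^ 2), F x.val :=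
      Fintype.sum_equiv (Equiv.subRight (((μ : ℕ) * d₁ : ℕ) : Fin (d₁ ^ 2))) _ _ (fun x => rfl)
    rw [h1, Fin.sum_univ_eq_sum_range F (d₁ ^ 2),
      ← Finset.sum_subset (Finset.range_subset_range.mpr (by nlinarith : d₁ ≤ d₁ ^ 2))
        (fun x _ hx => by
          rw [Finset.mem_range] at hx
          simp [hF, hx])]
    have hterm : ∀ j ∈ Finset.range d₁, F j
        = Complex.exp (2 * Real.pi * Complex.I * (((ν' : ℕ) : ℂ) - ((ν : ℕ) : ℂ)) / d₁) ^ j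
          * ((1 / Real.sqrt d₁ : ℂ) * (1 / Real.sqrt d₁ : ℂ)) := by
      intro j hj
      rw [Finset.mem_range] at hj
      simp only [hF, if_pos hj]
      have hc : star ((1 : ℂ) / (Real.sqrt d₁ : ℂ)) = 1 / (Real.sqrt d₁ : ℂ) := by
        rw [Complex.star_def, map_div₀, _root_.map_one, Complex.conj_ofReal]
      have hconjt : star (Complex.exp (2 * Real.pi * Complex.I * (j : ℂ) / (d₁ : ℂ) ^ 2))
          = Complex.exp (-(2 * Real.pi * Complex.I * (j : ℂ) / (d₁ : ℂ) ^ 2)) := by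
        rw [Complex.star_def, ← Complex.exp_conj]
        congr 1
        simp [map_div₀, _root_.map_mul, Complex.conj_I, Complex.conj_ofReal, map_ofNat]
        ring
      rw [star_mul', star_pow, hc, hconjt]
      have hre : Complex.exp (-(2 * Real.pi * Complex.I * (j : ℂ) / (d₁ : ℂ) ^ 2)) ^ ((ν : ℕ) * d₁)
            * (1 / (Real.sqrt d₁ : ℂ))
            * (Complex.exp (2 * Real.pi * Complex.I * (j : ℂ) / (d₁ : ℂ) ^ 2) ^ ((ν' : ℕ) * d₁)
              * (1 / (Real.sqrt d₁ : ℂ)))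
          = (Complex.exp (-(2 * Real.pi * Complex.I * (j : ℂ) / (d₁ : ℂ) ^ 2)) ^ ((ν : ℕ) * d₁)
              * Complex.exp (2 * Real.pi * Complex.I * (j : ℂ) / (d₁ : ℂ) ^ 2) ^ ((ν' : ℕ) * d₁))
            * ((1 / Real.sqrt d₁ : ℂ) * (1 / Real.sqrt d₁ : ℂ)) := by ring
      rw [hre, ← Complex.exp_nat_mul, ← Complex.exp_nat_mul, ← Complex.exp_nat_mul,
        ← Complex.exp_add]
      congr 2
      push_cast
      field_simp
      ring
    rw [Finset.sum_congr rfl hterm, ← Finset.sum_mul, geom_zero d₁ hd0 ν ν' hν, zero_mul]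
  · apply Finset.sum_eq_zero
    intro a _
    set b := a - (((μ : ℕ) * d₁ : ℕ) : Fin (d₁ ^ 2)) with hb
    set b' := a - (((μ' : ℕ) * d₁ : ℕ) : Fin (d₁ ^ 2)) with hb'
    have hzero : φ b = 0 ∨ φ b' = 0 := by
      by_contra hcon
      push_neg at hcon
      have h1 : b.val < d₁ := by
        by_contra h; exact hcon.1 (by rw [hφ]; simp [h])
      have h2 : b'.val < d₁ := by
        by_contra h; exact hcon.2 (by rw [hφ]; simp [h])
      have e1 : b + (((μ : ℕ) * d₁ : ℕ) : Fin (d₁ ^ 2)) = a := by rw [hb, sub_add_cancel]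
      have e2 : b' + (((μ' : ℕ) * d₁ : ℕ) : Fin (d₁ ^ 2)) = a := by rw [hb', sub_add_cancel]
      have e3 := congrArg Fin.val (e1.trans e2.symm)
      simp only [Fin.add_def, hval] at e3
      rw [Nat.mod_eq_of_lt (hbound b μ h1), Nat.mod_eq_of_lt (hbound b' μ' h2)] at e3
      have q1 : (b.val + (μ : ℕ) * d₁) / d₁ = (μ : ℕ) := by
        rw [Nat.add_mul_div_right _ _ hd0, Nat.div_eq_of_lt h1, zero_add]
      have q2 : (b'.val + (μ' : ℕ) * d₁) / d₁ = (μ' : ℕ) := by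
        rw [Nat.add_mul_div_right _ _ hd0, Nat.div_eq_of_lt h2, zero_add]
      exact hμ (Fin.ext (by rw [← q1, ← q2, e3]))
    rcases hzero with h | h <;> simp [h]
end
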